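/- arXiv:2101.08771 — 4 statements merged into one kernel-verified Lean document; each statement's English description precedes it below -/
import Mathlib

section
/- Let a,b,c,d,a',b',c',d' ∈ ℤ be such that Q_{2,1} = conv{(0,0),(a,b),(c,d)} and Q_{2,2} = conv{(0,0),(a',b'),(c',d')} are integral 2-simplices in ℝ². Suppose for some n > 2, the n-dimensional pyramids Q_{n,1} = conv{0, (a,b,0,…,0), (c,d,0,…,0), e_3, …, e_n} and Q_{n,2} = conv{0, (a',b',0,…,0), (c',d',0,…,0), e_3, …, e_n} in ℝⁿ are unimodularly equivalent. Then Q_{2,1} and Q_{2,2} are unimodularly equivalent. -/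
open Pointwise

/-- An affine-unimodular transformation `v ↦ A v + b` with `A ∈ GL_n(ℤ)`, `b ∈ ℤⁿ`. -/
def IsUnimodularMap (n : ℕ) (U : (Fin n → ℝ) → (Fin n → ℝ)) : Prop :=
  ∃ (A : Matrix (Fin n) (Fin n) ℤ) (b : Fin n → ℤ),
    (A.det = 1 ∨ A.det = -1) ∧
    ∀ v, U v = (A.map (Int.cast : ℤ → ℝ)).mulVec v + fun i => (b i : ℝ)

/-- Unimodular equivalence of subsets of ℝⁿ. -/
def UnimodEquiv (n : ℕ) (P Q : Set (Fin n → ℝ)) : Prop :=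
  ∃ U, IsUnimodularMap n U ∧ U '' P = Q

/-- The planar point `(a, b)` embedded in ℝⁿ (zero in all further coordinates). -/
def planarPt (n : ℕ) (a b : ℤ) : Fin n → ℝ :=
  fun i => if (i : ℕ) = 0 then (a : ℝ) else if (i : ℕ) = 1 then (b : ℝ) else 0

/-- Vertex set of the n-dimensional pyramid over `conv{(0,0),(a,b),(c,d)}`:
the points `(0,0)`, `(a,b)`, `(c,d)` embedded in ℝⁿ together with the standard basis
vectors `e₃, …, eₙ`. -/
def pyramidVerts (n : ℕ) (a b c d : ℤ) : Set (Fin n → ℝ) :=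
  {planarPt n 0 0, planarPt n a b, planarPt n c d} ∪
    {x | ∃ i : Fin n, 2 ≤ (i : ℕ) ∧ x = Pi.single i 1}

/-- The n-dimensional pyramid over the 2-simplex `conv{(0,0),(a,b),(c,d)}`. -/
def pyramid (n : ℕ) (a b c d : ℤ) : Set (Fin n → ℝ) :=
  convexHull ℝ (pyramidVerts n a b c d)

/-!
A unimodular map is an affine automorphism of `ℝⁿ` preserving `ℤⁿ`; it carries the extreme
points of one pyramid, i.e. its vertices, onto those of the other. Match every base vertex of the
first pyramid that is sent to a base vertex of the second with that vertex, and complete this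
matching to a bijection `σ` of the base vertices. The affine map `F` of the plane realising `σ` is
integral: expanding the image of a lattice point in barycentric coordinates, a base vertex sent to
an apex `eₖ` contributes its coordinate as the `k`-th coordinate of a lattice point, so that
coordinate is an integer, and the remaining discrepancy is an integral combination. The same
argument applies to the inverse of `F`, so `F` is unimodular.
-/

open Set Function

section ExtremePoints

variable {𝕜 E F ι : Type*} [Field 𝕜] [LinearOrder 𝕜] [IsStrictOrderedRing 𝕜]
  [AddCommGroup E] [Module 𝕜 E] [AddCommGroup F] [Module 𝕜 F]

lemma AffineEquiv.image_extremePoints (e : E ≃ᵃ[𝕜] F) (s : Set E) :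
    e '' s.extremePoints 𝕜 = (e '' s).extremePoints 𝕜 := by
  ext y
  obtain ⟨x, rfl⟩ := e.surjective y
  have h : ∀ x₁ x₂, e '' openSegment 𝕜 x₁ x₂ = openSegment 𝕜 (e x₁) (e x₂) :=
    image_openSegment 𝕜 e.toAffineMap
  simp only [mem_extremePoints, e.surjective.forall, e.injective.mem_set_image,
    e.injective.eq_iff, ← h]

lemma AffineBasis.coord_mem_Icc_of_mem_convexHull (b : AffineBasis ι 𝕜 E) {x : E}
    (hx : x ∈ convexHull 𝕜 (range b)) (i : ι) : b.coord i x ∈ Icc 0 1 := by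
  classical
  refine convexHull_min (range_subset_iff.2 fun j => ?_) ((convex_Icc 0 1).affine_preimage _) hx
  rw [mem_preimage, b.coord_apply]
  split_ifs <;> simp

theorem AffineBasis.extremePoints_convexHull [Finite ι] (b : AffineBasis ι 𝕜 E) :
    (convexHull 𝕜 (range b)).extremePoints 𝕜 = range b := by
  classical
  refine extremePoints_convexHull_subset.antisymm ?_
  rintro _ ⟨i, rfl⟩
  refine ⟨subset_convexHull 𝕜 _ (mem_range_self i), fun y hy z hz ⟨s, t, hs, ht, hst, hyz⟩ => ?_⟩
  -- the coordinates of `b i` are the endpoints `0, 1` of the range `[0, 1]` of all coordinates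
  refine b.ext_elem fun j => ?_
  have hcomb : b.coord j (b i) = s * b.coord j y + t * b.coord j z := by
    rw [← hyz, Convex.combo_affine_apply hst]
    rfl
  obtain ⟨hy0, hy1⟩ := b.coord_mem_Icc_of_mem_convexHull hy j
  obtain ⟨hz0, hz1⟩ := b.coord_mem_Icc_of_mem_convexHull hz j
  rw [b.coord_apply] at hcomb ⊢
  split_ifs at hcomb ⊢ <;> nlinarith

end ExtremePoints

theorem affineIndependent_cons_zero_iff {k V : Type*} [Ring k] [AddCommGroup V] [Module k V]
    {m : ℕ} (v : Fin m → V) :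
    AffineIndependent k (Fin.cons 0 v : Fin (m + 1) → V) ↔ LinearIndependent k v := by
  rw [affineIndependent_iff_linearIndependent_vsub k _ 0,
    ← linearIndependent_equiv (finSuccAboveEquiv 0)]
  congr!
  ext i : 1
  simp [finSuccAboveEquiv]

theorem Equiv.exists_perm_of_image_range_union {X Y ι : Type*} [Fintype ι] (φ : X ≃ Y)
    {u : ι → X} {v : ι → Y} (hu : Injective u) (hv : Injective v) {A : Set X} {B : Set Y}
    (h : φ '' (range u ∪ A) = range v ∪ B) :
    ∃ σ : ι ≃ ι, ∀ i, φ (u i) = v (σ i) ∨ (φ (u i) ∈ B ∧ φ.symm (v (σ i)) ∈ A) := by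
  classical
  set s := {i | φ (u i) ∈ range v}
  have hex : ∀ i, ∃ j, i ∈ s → v j = φ (u i) := fun i => by
    by_cases hi : i ∈ s
    · obtain ⟨j, hj⟩ := hi
      exact ⟨j, fun _ => hj⟩
    · exact ⟨i, fun h => absurd h hi⟩
  choose f hf using hex
  have hinj : InjOn f s := fun i hi i' hi' hii' =>
    hu (φ.injective (by rw [← hf i hi, ← hf i' hi', hii']))
  obtain ⟨g, hg⟩ := Set.MapsTo.exists_equiv_extend_of_card_eq (t := Finset.univ) (by simp)
    (fun _ _ => Finset.mem_coe.2 (Finset.mem_univ _)) hinj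
  let σ := g.trans (Equiv.subtypeUnivEquiv Finset.mem_univ)
  have hσ : ∀ i ∈ s, σ i = f i := hg
  refine ⟨σ, fun i => ?_⟩
  by_cases hi : i ∈ s
  · exact Or.inl (by rw [hσ i hi, hf i hi])
  refine Or.inr ⟨?_, ?_⟩
  · have hmem : φ (u i) ∈ range v ∪ B := h ▸ mem_image_of_mem φ (Or.inl (mem_range_self i))
    exact hmem.resolve_left hi
  · obtain ⟨x, hx, hxv⟩ : v (σ i) ∈ φ '' (range u ∪ A) := h ▸ Or.inl (mem_range_self _)
    rw [← hxv, φ.symm_apply_apply]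
    refine hx.resolve_left ?_
    rintro ⟨l, rfl⟩
    have hl : l ∈ s := ⟨σ i, hxv.symm⟩
    have : σ l = σ i := by rw [hσ l hl]; exact hv ((hf l hl).trans hxv)
    exact hi (σ.injective this ▸ hl)

section AffineBasis

variable {k V W ι : Type*} [Ring k] [AddCommGroup V] [Module k V] [AddCommGroup W] [Module k W]
  [Fintype ι]

lemma AffineBasis.map_eq_sum_coord_smul (b : AffineBasis ι k V) (φ : V →ᵃ[k] W) (x : V) :
    φ x = ∑ i, b.coord i x • φ (b i) := by
  conv_lhs => rw [← b.affineCombination_coord_eq_self x]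
  rw [Finset.map_affineCombination _ _ _ (b.sum_coord_apply_eq_one x),
    Finset.affineCombination_eq_linear_combination _ _ _ (b.sum_coord_apply_eq_one x)]
  rfl

lemma AffineBasis.exists_affineMap (b : AffineBasis ι k V) (t : ι → W) :
    ∃ F : V →ᵃ[k] W, ∀ i, F (b i) = t i := by
  classical
  refine ⟨(Fintype.linearCombination k t).toAffineMap.comp b.coords, fun i => ?_⟩
  simp [Fintype.linearCombination_apply, AffineBasis.coords_apply, b.coord_apply]

end AffineBasis

def intLattice (n : ℕ) : AddSubgroup (Fin n → ℝ) where
  carrier := {x | ∀ i, ∃ z : ℤ, x i = z}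
  add_mem' {x y} hx hy i := by
    obtain ⟨z, hz⟩ := hx i
    obtain ⟨w, hw⟩ := hy i
    exact ⟨z + w, by simp [hz, hw]⟩
  zero_mem' i := ⟨0, by simp⟩
  neg_mem' {x} hx i := by
    obtain ⟨z, hz⟩ := hx i
    exact ⟨-z, by simp [hz]⟩

section Unimodular

variable {n : ℕ}

lemma intCast_mem_intLattice (z : Fin n → ℤ) : (fun i => (z i : ℝ)) ∈ intLattice n :=
  fun i => ⟨z i, rfl⟩

lemma single_one_mem_intLattice (k : Fin n) : Pi.single k 1 ∈ intLattice n :=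
  fun i => ⟨if i = k then 1 else 0, by simp [Pi.single_apply]⟩

lemma intMatrix_mulVec_mem_intLattice (A : Matrix (Fin n) (Fin n) ℤ) {x : Fin n → ℝ}
    (hx : x ∈ intLattice n) : (A.map (Int.cast : ℤ → ℝ)).mulVec x ∈ intLattice n := by
  choose z hz using hx
  obtain rfl : x = fun i => (z i : ℝ) := funext hz
  exact fun i => ⟨A.mulVec z i, by simp [Matrix.mulVec, dotProduct]⟩

lemma intCast_map_mul (A B : Matrix (Fin n) (Fin n) ℤ) :
    (A * B).map (Int.cast : ℤ → ℝ) = A.map Int.cast * B.map Int.cast :=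
  Matrix.map_mul (f := Int.castRingHom ℝ)

lemma intCast_map_one : (1 : Matrix (Fin n) (Fin n) ℤ).map (Int.cast : ℤ → ℝ) = 1 :=
  Matrix.map_one _ Int.cast_zero Int.cast_one

theorem IsUnimodularMap.exists_affineEquiv {U : (Fin n → ℝ) → (Fin n → ℝ)}
    (hU : IsUnimodularMap n U) : ∃ e : (Fin n → ℝ) ≃ᵃ[ℝ] (Fin n → ℝ), ⇑e = U ∧
      MapsTo e (intLattice n) (intLattice n) ∧ MapsTo e.symm (intLattice n) (intLattice n) := by
  obtain ⟨A, b, hdet, hUv⟩ := hU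
  have hA : IsUnit A.det := Int.isUnit_iff.2 hdet
  set M := A.map (Int.cast : ℤ → ℝ)
  set M' := A⁻¹.map (Int.cast : ℤ → ℝ)
  set b' : Fin n → ℝ := fun i => (b i : ℝ)
  have hMM' : M * M' = 1 := by rw [← intCast_map_mul, A.mul_nonsing_inv hA, intCast_map_one]
  have hM'M : M' * M = 1 := by rw [← intCast_map_mul, A.nonsing_inv_mul hA, intCast_map_one]
  let f : (Fin n → ℝ) →ᵃ[ℝ] (Fin n → ℝ) :=
    (Matrix.toLin' M).toAffineMap + AffineMap.const ℝ (Fin n → ℝ) b'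
  have hf : ⇑f = U := funext fun v => (hUv v).symm
  have hinv : ∀ v, f (M'.mulVec (v - b')) = v := fun v => by
    simp [f, Matrix.mulVec_mulVec, hMM']
  have hfinj : Injective f := by
    intro v w hvw
    have h := congrArg (M'.mulVec ∘ (· - b')) hvw
    simpa [f, Matrix.mulVec_mulVec, hM'M] using h
  let e := AffineEquiv.ofBijective ⟨hfinj, fun v => ⟨_, hinv v⟩⟩
  refine ⟨e, hf, fun v hv => ?_, fun v hv => ?_⟩
  · show f v ∈ intLattice n
    exact add_mem (intMatrix_mulVec_mem_intLattice A hv) (intCast_mem_intLattice b)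
  · rw [show e.symm v = M'.mulVec (v - b') from e.symm_apply_eq.2 (hinv v).symm]
    exact intMatrix_mulVec_mem_intLattice _ (sub_mem hv (intCast_mem_intLattice b))

lemma exists_intMatrix_eq_toMatrix' (f : (Fin n → ℝ) →ᵃ[ℝ] (Fin n → ℝ))
    (hf : MapsTo f (intLattice n) (intLattice n)) :
    ∃ A : Matrix (Fin n) (Fin n) ℤ, A.map Int.cast = LinearMap.toMatrix' f.linear := by
  have hcol : ∀ j, f.linear (Pi.single j 1) ∈ intLattice n := fun j => by
    have h := f.linearMap_vsub (Pi.single j 1) 0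
    simp only [vsub_eq_sub, sub_zero] at h
    rw [h]
    exact sub_mem (hf (single_one_mem_intLattice j)) (hf (zero_mem _))
  choose A hA using fun i j => hcol j i
  exact ⟨Matrix.of A, Matrix.ext fun i j => by simp [LinearMap.toMatrix'_apply, hA]⟩

theorem isUnimodularMap_of_rightInverse (f g : (Fin n → ℝ) →ᵃ[ℝ] (Fin n → ℝ))
    (hfg : RightInverse g f) (hf : MapsTo f (intLattice n) (intLattice n))
    (hg : MapsTo g (intLattice n) (intLattice n)) : IsUnimodularMap n f := by
  obtain ⟨A, hA⟩ := exists_intMatrix_eq_toMatrix' f hf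
  obtain ⟨B, hB⟩ := exists_intMatrix_eq_toMatrix' g hg
  obtain ⟨b, hb⟩ : ∃ b : Fin n → ℤ, (fun i => (b i : ℝ)) = f 0 := by
    choose b hb using hf (zero_mem (intLattice n))
    exact ⟨b, funext fun i => (hb i).symm⟩
  have hlin : f.linear ∘ₗ g.linear = LinearMap.id := by
    rw [← AffineMap.comp_linear, show f.comp g = AffineMap.id ℝ _ from AffineMap.ext hfg]
    rfl
  have hAB : A * B = 1 := Matrix.map_injective Int.cast_injective <| by
    change (A * B).map Int.cast = (1 : Matrix (Fin n) (Fin n) ℤ).map (Int.cast : ℤ → ℝ)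
    rw [intCast_map_mul, hA, hB, ← LinearMap.toMatrix'_comp, hlin, LinearMap.toMatrix'_id,
      intCast_map_one]
  refine ⟨A, b, Int.isUnit_iff.1 (IsUnit.of_mul_eq_one B.det ?_), fun v => ?_⟩
  · rw [← Matrix.det_mul, hAB, Matrix.det_one]
  · rw [hA, LinearMap.toMatrix'_mulVec, hb]
    exact congrFun f.decomp v

end Unimodular

section Pyramid

variable {n : ℕ}

def planarEmb (n : ℕ) : (Fin 2 → ℝ) →ₗ[ℝ] (Fin n → ℝ) where
  toFun x i := if (i : ℕ) = 0 then x 0 else if (i : ℕ) = 1 then x 1 else 0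
  map_add' x y := by ext i; simp only [Pi.add_apply]; split_ifs <;> simp
  map_smul' r x := by ext i; simp only [Pi.smul_apply, smul_eq_mul]; split_ifs <;> simp

lemma planarEmb_planarPt (a b : ℤ) : planarEmb n (planarPt 2 a b) = planarPt n a b := by
  ext i
  simp [planarEmb, planarPt]

lemma planarEmb_apply_of_two_le (x : Fin 2 → ℝ) {k : Fin n} (hk : 2 ≤ (k : ℕ)) :
    planarEmb n x k = 0 := by
  simp [planarEmb, show (k : ℕ) ≠ 0 by omega, show (k : ℕ) ≠ 1 by omega]

lemma planarEmb_apply_of_lt (hn : 2 ≤ n) (x : Fin 2 → ℝ) (j : Fin 2) :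
    planarEmb n x ⟨j, by omega⟩ = x j := by
  fin_cases j <;> simp [planarEmb]

lemma planarEmb_injective (hn : 2 ≤ n) : Injective (planarEmb n) := fun x y hxy => by
  ext j
  rw [← planarEmb_apply_of_lt hn x j, ← planarEmb_apply_of_lt hn y j, hxy]

lemma planarEmb_mem_intLattice_iff (hn : 2 ≤ n) {x : Fin 2 → ℝ} :
    planarEmb n x ∈ intLattice n ↔ x ∈ intLattice 2 := by
  refine ⟨fun h j => planarEmb_apply_of_lt hn x j ▸ h _, fun h i => ?_⟩
  simp only [planarEmb, LinearMap.coe_mk, AddHom.coe_mk]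
  split_ifs
  exacts [h 0, h 1, ⟨0, by simp⟩]

lemma planarPt_mem_intLattice (a b : ℤ) : planarPt n a b ∈ intLattice n := fun i => by
  unfold planarPt
  split_ifs
  exacts [⟨a, rfl⟩, ⟨b, rfl⟩, ⟨0, by simp⟩]

def apexVerts (n : ℕ) : Set (Fin n → ℝ) := {x | ∃ i : Fin n, 2 ≤ (i : ℕ) ∧ x = Pi.single i 1}

lemma pyramidVerts_eq_image_union (a b c d : ℤ) :
    pyramidVerts n a b c d = planarEmb n '' pyramidVerts 2 a b c d ∪ apexVerts n := by
  have hapex : apexVerts 2 = ∅ := eq_empty_of_forall_notMem fun x ⟨i, hi, _⟩ => by omega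
  rw [pyramidVerts, pyramidVerts, ← apexVerts, ← apexVerts, hapex, union_empty, image_insert_eq,
    image_insert_eq, image_singleton, planarEmb_planarPt, planarEmb_planarPt, planarEmb_planarPt]

def pyramidVertex (n : ℕ) (a b c d : ℤ) : Fin (n + 1) → Fin n → ℝ :=
  Fin.cons 0 fun i =>
    if (i : ℕ) = 0 then planarPt n a b else if (i : ℕ) = 1 then planarPt n c d else Pi.single i 1

lemma linearIndependent_tail_pyramidVertex (hn : 2 ≤ n) {a b c d : ℤ} (h : a * d - b * c ≠ 0) :
    LinearIndependent ℝ (Fin.tail (pyramidVertex n a b c d)) := by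
  obtain ⟨m, rfl⟩ := Nat.exists_eq_add_of_le' hn
  rw [Fintype.linearIndependent_iff]
  intro g hg
  have hcoord : ∀ k, ∑ i, g i * Fin.tail (pyramidVertex (m + 2) a b c d) i k = 0 := fun k => by
    simpa using congrFun hg k
  have h0 := hcoord 0
  have h1 := hcoord 1
  have hk := fun j : Fin m => hcoord j.succ.succ
  simp [Fin.sum_univ_succ, pyramidVertex, Fin.tail, planarPt, Pi.single_apply,
    Fin.succ_succ_ne_one] at h0 h1 hk
  have hr : (a * d - b * c : ℝ) ≠ 0 := by exact_mod_cast h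
  have hg0 : g 0 = 0 := mul_left_cancel₀ hr (by linear_combination (d : ℝ) * h0 - c * h1)
  have hg1 : g 1 = 0 := mul_left_cancel₀ hr (by linear_combination (a : ℝ) * h1 - b * h0)
  intro i
  induction i using Fin.cases with
  | zero => exact hg0
  | succ i => induction i using Fin.cases with
    | zero => exact hg1
    | succ j => exact hk j

noncomputable def pyramidBasis (hn : 2 ≤ n) {a b c d : ℤ} (h : a * d - b * c ≠ 0) :
    AffineBasis (Fin (n + 1)) ℝ (Fin n → ℝ) :=
  have hind : AffineIndependent ℝ (pyramidVertex n a b c d) :=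
    (affineIndependent_cons_zero_iff _).2 (linearIndependent_tail_pyramidVertex hn h)
  ⟨pyramidVertex n a b c d, hind, hind.affineSpan_eq_top_iff_card_eq_finrank_add_one.2 (by simp)⟩

lemma range_pyramidBasis (hn : 2 ≤ n) {a b c d : ℤ} (h : a * d - b * c ≠ 0) :
    range (pyramidBasis hn h) = pyramidVerts n a b c d := by
  change range (pyramidVertex n a b c d) = _
  have h0 : planarPt n 0 0 = 0 := by ext i; simp [planarPt]
  rw [pyramidVertex, Fin.range_cons, pyramidVerts, h0, ← apexVerts]
  ext x
  simp only [mem_insert_iff, mem_range, mem_union, mem_singleton_iff, apexVerts, mem_ofPred_eq]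
  constructor
  · rintro (rfl | ⟨i, rfl⟩)
    · exact Or.inl (Or.inl rfl)
    · split_ifs with hi0 hi1
      exacts [Or.inl (Or.inr (Or.inl rfl)), Or.inl (Or.inr (Or.inr rfl)), Or.inr ⟨i, by omega, rfl⟩]
  · rintro ((rfl | rfl | rfl) | ⟨i, hi, rfl⟩)
    · exact Or.inl rfl
    · exact Or.inr ⟨⟨0, by omega⟩, by simp⟩
    · exact Or.inr ⟨⟨1, by omega⟩, by simp⟩
    · exact Or.inr ⟨i, by simp [show (i : ℕ) ≠ 0 by omega, show (i : ℕ) ≠ 1 by omega]⟩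

lemma pyramidBasis_mem_intLattice (hn : 2 ≤ n) {a b c d : ℤ} (h : a * d - b * c ≠ 0)
    (i : Fin (n + 1)) : pyramidBasis hn h i ∈ intLattice n := by
  have hi : pyramidBasis hn h i ∈ pyramidVerts n a b c d :=
    range_pyramidBasis hn h ▸ mem_range_self i
  rcases hi with ((hi | hi | hi) | ⟨k, -, hi⟩) <;> rw [hi]
  exacts [planarPt_mem_intLattice 0 0, planarPt_mem_intLattice a b, planarPt_mem_intLattice c d,
    single_one_mem_intLattice k]

theorem extremePoints_pyramid (hn : 2 ≤ n) {a b c d : ℤ} (h : a * d - b * c ≠ 0) :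
    (pyramid n a b c d).extremePoints ℝ = pyramidVerts n a b c d := by
  rw [pyramid, ← range_pyramidBasis hn h, AffineBasis.extremePoints_convexHull]

end Pyramid

theorem mapsTo_intLattice_of_map_planarEmb {n : ℕ} (hn : 2 ≤ n) {ι : Type*} [Fintype ι]
    (β : AffineBasis ι ℝ (Fin 2 → ℝ)) (f : (Fin n → ℝ) →ᵃ[ℝ] (Fin n → ℝ))
    (hf : MapsTo f (intLattice n) (intLattice n)) (hinj : Injective (f ∘ planarEmb n ∘ β))
    (F : (Fin 2 → ℝ) →ᵃ[ℝ] (Fin 2 → ℝ)) (hF : ∀ i, F (β i) ∈ intLattice 2)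
    (hβ : ∀ i, f (planarEmb n (β i)) = planarEmb n (F (β i)) ∨
      f (planarEmb n (β i)) ∈ apexVerts n) :
    MapsTo F (intLattice 2) (intLattice 2) := by
  intro x hx
  have hfx : f (planarEmb n x) ∈ intLattice n := hf ((planarEmb_mem_intLattice_iff hn).2 hx)
  have hexpand : f (planarEmb n x) = ∑ i, β.coord i x • f (planarEmb n (β i)) :=
    β.map_eq_sum_coord_smul (f.comp (planarEmb n).toAffineMap) x
  -- a vertex sent to the apex `eₖ` has its barycentric coordinate read off in coordinate `k`
  have hint : ∀ i, f (planarEmb n (β i)) ∈ apexVerts n → ∃ z : ℤ, β.coord i x = z := by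
    rintro i ⟨k, hk, hki⟩
    obtain ⟨z, hz⟩ := hfx k
    refine ⟨z, ?_⟩
    rw [← hz, hexpand, Finset.sum_apply, Finset.sum_eq_single i]
    · simp [hki]
    · intro j _ hji
      rcases hβ j with hj | ⟨k', hk', hj⟩
      · simp [hj, planarEmb_apply_of_two_le _ hk]
      · have hkk : k ≠ k' := fun hkk => hji (hinj (by simp [hj, hki, hkk]))
        simp [hj, hkk]
    · simp
  have key : planarEmb n (F x) = f (planarEmb n x) -
      ∑ i, β.coord i x • (f (planarEmb n (β i)) - planarEmb n (F (β i))) := by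
    rw [β.map_eq_sum_coord_smul F x, map_sum, hexpand]
    simp [smul_sub, Finset.sum_sub_distrib]
  rw [SetLike.mem_coe, ← planarEmb_mem_intLattice_iff hn, key]
  refine sub_mem hfx (sum_mem fun i _ => ?_)
  rcases hβ i with h | h
  · simp [h]
  · obtain ⟨z, hz⟩ := hint i h
    obtain ⟨k, -, hki⟩ := h
    rw [hz, Int.cast_smul_eq_zsmul, hki]
    exact zsmul_mem (sub_mem (single_one_mem_intLattice k)
      ((planarEmb_mem_intLattice_iff hn).2 (hF i))) z

theorem unimodEquiv_of_image_pyramidVerts {n : ℕ} (hn : 2 ≤ n) {a b c d a' b' c' d' : ℤ}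
    (h1 : a * d - b * c ≠ 0) (h2 : a' * d' - b' * c' ≠ 0) (e : (Fin n → ℝ) ≃ᵃ[ℝ] (Fin n → ℝ))
    (he : MapsTo e (intLattice n) (intLattice n))
    (he' : MapsTo e.symm (intLattice n) (intLattice n))
    (himg : e '' pyramidVerts n a b c d = pyramidVerts n a' b' c' d') :
    UnimodEquiv 2 (pyramid 2 a b c d) (pyramid 2 a' b' c' d') := by
  set β := pyramidBasis le_rfl h1
  set β' := pyramidBasis le_rfl h2
  have hemb : ∀ {a b c d : ℤ} (h : a * d - b * c ≠ 0),
      Injective (planarEmb n ∘ pyramidBasis le_rfl h) :=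
    fun _ => (planarEmb_injective hn).comp (AffineBasis.ind _).injective
  have hverts : ∀ {a b c d : ℤ} (h : a * d - b * c ≠ 0),
      pyramidVerts n a b c d = range (planarEmb n ∘ pyramidBasis le_rfl h) ∪ apexVerts n :=
    fun h => by rw [pyramidVerts_eq_image_union, range_comp, range_pyramidBasis]
  obtain ⟨σ, hσ⟩ := e.toEquiv.exists_perm_of_image_range_union (hemb h1) (hemb h2)
    (by rw [← hverts h1, ← hverts h2]; exact himg)
  obtain ⟨F, hF⟩ := β.exists_affineMap (β' ∘ σ)
  obtain ⟨G, hG⟩ := β'.exists_affineMap (β ∘ σ.symm)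
  have hFG : RightInverse G F := fun y => by
    have hid : F.comp G = AffineMap.id ℝ _ := AffineMap.ext_on β'.tot <| by
      rintro _ ⟨j, rfl⟩
      simp [hF, hG]
    exact congrArg (· y) hid
  have hFL : MapsTo F (intLattice 2) (intLattice 2) := by
    refine mapsTo_intLattice_of_map_planarEmb hn β e.toAffineMap he (e.injective.comp (hemb h1))
      F (fun i => hF i ▸ pyramidBasis_mem_intLattice le_rfl h2 _) fun i => ?_
    refine (hσ i).imp (fun h => ?_) And.left
    rw [hF]
    exact h
  have hGL : MapsTo G (intLattice 2) (intLattice 2) := by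
    refine mapsTo_intLattice_of_map_planarEmb hn β' e.symm.toAffineMap he'
      (e.symm.injective.comp (hemb h2)) G
      (fun j => hG j ▸ pyramidBasis_mem_intLattice le_rfl h1 _) fun j => ?_
    have hj := hσ (σ.symm j)
    rw [σ.apply_symm_apply] at hj
    refine hj.imp (fun h => ?_) And.right
    rw [hG]
    exact e.symm_apply_eq.2 h.symm
  refine ⟨F, isUnimodularMap_of_rightInverse F G hFG hFL hGL, ?_⟩
  rw [pyramid, pyramid, ← range_pyramidBasis le_rfl h1, ← range_pyramidBasis le_rfl h2,
    F.image_convexHull, ← range_comp, show ⇑F ∘ β = β' ∘ σ from funext hF,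
    σ.surjective.range_comp]

/-- If for some `n > 2` the n-dimensional pyramids of the integral 2-simplices
`conv{(0,0),(a,b),(c,d)}` and `conv{(0,0),(a',b'),(c',d')}` are unimodularly equivalent,
then those two 2-simplices are unimodularly equivalent. -/
theorem base_unimodEquiv_of_pyramid (a b c d a' b' c' d' : ℤ)
    (h1 : a * d - b * c ≠ 0) (h2 : a' * d' - b' * c' ≠ 0)
    (n : ℕ) (hn : 2 < n)
    (h : UnimodEquiv n (pyramid n a b c d) (pyramid n a' b' c' d')) :
    UnimodEquiv 2 (pyramid 2 a b c d) (pyramid 2 a' b' c' d') := by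
  obtain ⟨U, hU, himg⟩ := h
  obtain ⟨e, rfl, he, he'⟩ := hU.exists_affineEquiv
  have hverts : e '' pyramidVerts n a b c d = pyramidVerts n a' b' c' d' := by
    rw [← extremePoints_pyramid hn.le h1, ← extremePoints_pyramid hn.le h2,
      e.image_extremePoints, himg]
  exact unimodEquiv_of_image_pyramidVerts hn.le h1 h2 e he he' hverts
end

section
/- Let n > 2 and let a,b,c,d,a',b',c',d' ∈ ℤ with ad−bc ≠ 0 and a'd'−b'c' ≠ 0. Let Q_{n,1} = conv{0, (a,b,0,…,0), (c,d,0,…,0), e_3, …, e_n} ⊂ ℝⁿ and Q_{n,2} = conv{0, (a',b',0,…,0), (c',d',0,…,0), e_3, …, e_n} ⊂ ℝⁿ. Suppose U is an affine-unimodular transformation with U(Q_{n,1}) = Q_{n,2} and U(0) = e_i for some 3 ≤ i ≤ n. Then with ℓ = gcd(c−a, d−b), the 2×2 matrix with columns (a,b) and ((c−a)/ℓ, (d−b)/ℓ) lies in GL_2(ℤ); equivalently, |ad − bc| = gcd(c−a, d−b). -/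
/-!
Let `m = ad - bc`. On `Q_{n,2}` the coordinate `xᵢ` lies in `[0, 1]` and equals `1` only at the
vertex `eᵢ`. Since `U` is injective and `U 0 = eᵢ`, the integer-valued affine function
`v ↦ U(v)ᵢ = r v₁ + s v₂ + 1` lies in `[0, 1)` at the vertices `(a, b)` and `(c, d)`, so
`ra + sb = rc + sd = -1`. Hence `(c - a, d - b) = m (s, -r)` with `s, r` coprime, so
`gcd(c - a, d - b) = |m|` and the determinant in question is the sign of `m`.
-/

open Pointwise

section Face

variable {𝕜 E : Type*} [Field 𝕜] [LinearOrder 𝕜] [IsStrictOrderedRing 𝕜] [AddCommGroup E]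
  [Module 𝕜 E]

theorem mem_convexHull_sep_of_apply_eq {s : Set E} (f : E →ₗ[𝕜] 𝕜) {c : 𝕜}
    (hs : ∀ v ∈ s, f v ≤ c) {x : E} (hx : x ∈ convexHull 𝕜 s) (hfx : f x = c) :
    x ∈ convexHull 𝕜 {v ∈ s | f v = c} := by
  classical
  obtain ⟨ι, t, w, z, hw₀, hw₁, hz, rfl⟩ := (convexHull_eq s).subset hx
  have hslack : ∑ k ∈ t, w k * (c - f (z k)) = 0 := by
    rw [Finset.centerMass_eq_of_sum_1 _ _ hw₁, map_sum] at hfx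
    simp only [map_smul, smul_eq_mul] at hfx
    simp only [mul_sub, Finset.sum_sub_distrib, ← Finset.sum_mul, hw₁, hfx, one_mul, sub_self]
  have hterm := (Finset.sum_eq_zero_iff_of_nonneg fun k hk =>
    mul_nonneg (hw₀ k hk) (sub_nonneg.mpr (hs _ (hz k hk)))).mp hslack
  rw [← Finset.centerMass_filter_ne_zero]
  refine Finset.centerMass_mem_convexHull _ (fun k hk => hw₀ k (Finset.mem_filter.mp hk).1)
    (by rw [Finset.sum_filter_ne_zero, hw₁]; exact one_pos) fun k hk => ?_
  obtain ⟨hkt, hwk⟩ := Finset.mem_filter.mp hk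
  exact ⟨hz k hkt, (sub_eq_zero.mp ((mul_eq_zero.mp (hterm k hkt)).resolve_left hwk)).symm⟩

end Face

section Pyramid

variable {n : ℕ} {a b c d : ℤ} {i : Fin n}

theorem planarPt_apply_of_two_le (p q : ℤ) (hi : 2 ≤ (i : ℕ)) : planarPt n p q i = 0 := by
  simp [planarPt, show (i : ℕ) ≠ 0 by omega, show (i : ℕ) ≠ 1 by omega]

theorem apply_mem_Icc_of_mem_pyramidVerts (hi : 2 ≤ (i : ℕ)) {v : Fin n → ℝ}
    (hv : v ∈ pyramidVerts n a b c d) : v i ∈ Set.Icc 0 1 := by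
  rcases hv with (rfl | rfl | rfl) | ⟨j, -, rfl⟩ <;>
    simp [planarPt_apply_of_two_le _ _ hi, Pi.single_apply, apply_ite]

theorem eq_single_of_mem_pyramidVerts (hi : 2 ≤ (i : ℕ)) {v : Fin n → ℝ}
    (hv : v ∈ pyramidVerts n a b c d) (hvi : v i = 1) : v = Pi.single i 1 := by
  rcases hv with (rfl | rfl | rfl) | ⟨j, -, rfl⟩ <;>
    simp [planarPt_apply_of_two_le _ _ hi, Pi.single_apply] at hvi
  rw [hvi]

theorem apply_mem_Icc_of_mem_pyramid (hi : 2 ≤ (i : ℕ)) {x : Fin n → ℝ}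
    (hx : x ∈ pyramid n a b c d) : x i ∈ Set.Icc 0 1 :=
  convexHull_min (fun _ hv => apply_mem_Icc_of_mem_pyramidVerts hi hv)
    ((convex_Icc 0 1).linear_preimage (LinearMap.proj i)) hx

theorem eq_single_of_mem_pyramid (hi : 2 ≤ (i : ℕ)) {x : Fin n → ℝ}
    (hx : x ∈ pyramid n a b c d) (hxi : x i = 1) : x = Pi.single i 1 := by
  have hface := mem_convexHull_sep_of_apply_eq (LinearMap.proj i)
    (fun _ hv => (apply_mem_Icc_of_mem_pyramidVerts hi hv).2) hx hxi
  have hsub : {v ∈ pyramidVerts n a b c d | v i = 1} ⊆ {Pi.single i 1} :=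
    fun _ hv => eq_single_of_mem_pyramidVerts hi hv.1 hv.2
  simpa using convexHull_mono hsub hface

end Pyramid

theorem planarPt_eq_single_add_single {n : ℕ} (hn : 1 < n) (p q : ℤ) :
    planarPt n p q = Pi.single ⟨0, by omega⟩ (p : ℝ) + Pi.single ⟨1, hn⟩ (q : ℝ) := by
  funext j
  rcases j with ⟨_ | _ | j, hj⟩ <;> simp [planarPt, Fin.ext_iff]

theorem planarPt_inj {n : ℕ} (hn : 1 < n) {p q p' q' : ℤ} :
    planarPt n p q = planarPt n p' q' ↔ p = p' ∧ q = q' := by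
  refine ⟨fun h => ?_, by rintro ⟨rfl, rfl⟩; rfl⟩
  have h0 := congrFun h ⟨0, by omega⟩
  have h1 := congrFun h ⟨1, hn⟩
  simp only [planarPt] at h0 h1
  exact ⟨by exact_mod_cast h0, by exact_mod_cast h1⟩

namespace IsUnimodularMap

variable {n : ℕ} {U : (Fin n → ℝ) → (Fin n → ℝ)}

theorem injective (hU : IsUnimodularMap n U) : Function.Injective U := by
  obtain ⟨A, β, hdet, hUA⟩ := hU
  have hA : IsUnit (A.map (Int.cast : ℤ → ℝ)) := by
    rw [Matrix.isUnit_iff_isUnit_det, ← Int.cast_det]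
    rcases hdet with h | h <;> simp [h]
  intro v w hvw
  rw [hUA, hUA, add_left_inj] at hvw
  exact Matrix.mulVec_injective_iff_isUnit.mpr hA hvw

theorem exists_apply_planarPt (hU : IsUnimodularMap n U) (hn : 1 < n) (i : Fin n) :
    ∃ r s t : ℤ, ∀ p q : ℤ, U (planarPt n p q) i = ((p * r + q * s + t : ℤ) : ℝ) := by
  obtain ⟨A, β, -, hUA⟩ := hU
  refine ⟨A i ⟨0, by omega⟩, A i ⟨1, hn⟩, β i, fun p q => ?_⟩
  rw [hUA, planarPt_eq_single_add_single hn]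
  simp only [Matrix.mulVec_add, Matrix.mulVec_single, MulOpposite.op_intCast, Pi.add_apply,
    Pi.smul_apply, Matrix.col_apply, Matrix.map_apply, MulOpposite.smul_eq_mul_unop,
    MulOpposite.unop_intCast, Int.cast_add, Int.cast_mul]
  ring

end IsUnimodularMap

theorem apply_mem_Ico_of_mem_pyramid {n : ℕ} {a b c d a' b' c' d' : ℤ}
    {U : (Fin n → ℝ) → (Fin n → ℝ)} (hinj : Function.Injective U)
    (hUQ : U '' pyramid n a b c d = pyramid n a' b' c' d') {i : Fin n} (hi : 2 ≤ (i : ℕ))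
    (hUe : U (planarPt n 0 0) = Pi.single i 1) {x : Fin n → ℝ}
    (hx : x ∈ pyramid n a b c d) (hx₀ : x ≠ planarPt n 0 0) : U x i ∈ Set.Ico 0 1 := by
  have hUx : U x ∈ pyramid n a' b' c' d' := hUQ ▸ Set.mem_image_of_mem U hx
  obtain ⟨h0, h1⟩ := apply_mem_Icc_of_mem_pyramid hi hUx
  refine ⟨h0, h1.lt_of_ne fun h => hx₀ (hinj ?_)⟩
  rw [hUe]
  exact eq_single_of_mem_pyramid hi hUx h

theorem isUnit_det_of_mul_add_mul_eq_neg_one {a b c d r s : ℤ} (h : a * d - b * c ≠ 0)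
    (hab : a * r + b * s = -1) (hcd : c * r + d * s = -1) :
    IsUnit (!![a, (c - a) / (Int.gcd (c - a) (d - b) : ℤ);
        b, (d - b) / (Int.gcd (c - a) (d - b) : ℤ)]).det := by
  set m := a * d - b * c
  have hca : c - a = m * s := by linear_combination c * hab - a * hcd
  have hdb : d - b = m * -r := by linear_combination d * hab - b * hcd
  have hgcd : (Int.gcd (c - a) (d - b) : ℤ) = m.natAbs := by
    have hcop : IsCoprime s (-r) := ⟨-b, a, by linear_combination -hab⟩
    rw [hca, hdb, Int.gcd_mul_left, Int.isCoprime_iff_gcd_eq_one.mp hcop, mul_one]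
  have hdiv (x : ℤ) : m * x / m.natAbs = m.sign * x := by
    nth_rw 1 [← Int.sign_mul_natAbs m]
    rw [mul_right_comm]
    exact Int.mul_ediv_cancel _ (by omega)
  rw [hgcd, hca, hdb, hdiv, hdiv, Matrix.det_fin_two_of,
    show a * (m.sign * -r) - m.sign * s * b = m.sign by linear_combination -m.sign * hab,
    Int.isUnit_iff_natAbs_eq]
  exact Int.natAbs_sign_of_ne_zero h

theorem origin_to_basis_gcd_general (n : ℕ) (a b c d a' b' c' d' : ℤ)
    (h1 : a * d - b * c ≠ 0)
    (U : (Fin n → ℝ) → (Fin n → ℝ)) (hU : IsUnimodularMap n U)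
    (hUQ : U '' pyramid n a b c d = pyramid n a' b' c' d')
    (i : Fin n) (hi : 2 ≤ (i : ℕ))
    (hUe : U (planarPt n 0 0) = Pi.single i 1) :
    (!![a, (c - a) / (Int.gcd (c - a) (d - b) : ℤ);
        b, (d - b) / (Int.gcd (c - a) (d - b) : ℤ)]).det = 1 ∨
      (!![a, (c - a) / (Int.gcd (c - a) (d - b) : ℤ);
          b, (d - b) / (Int.gcd (c - a) (d - b) : ℤ)]).det = -1 := by
  have hn : 1 < n := by omega
  obtain ⟨r, s, t, hU_i⟩ := hU.exists_apply_planarPt hn i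
  have ht : t = 1 := by simpa [hU_i] using congrFun hUe i
  -- At a nonzero planar vertex, `U v i` is an integer in `[0, 1)`, hence `0`.
  have hvertex (p q : ℤ) (hpq : (p, q) ≠ (0, 0))
      (hmem : planarPt n p q ∈ pyramidVerts n a b c d) : p * r + q * s = -1 := by
    have hne : planarPt n p q ≠ planarPt n 0 0 := by
      simpa [planarPt_inj hn] using hpq
    have h := apply_mem_Ico_of_mem_pyramid hU.injective hUQ hi hUe
      (subset_convexHull ℝ _ hmem) hne
    rw [hU_i, ht, Set.mem_Ico] at h
    have : (0 : ℤ) ≤ p * r + q * s + 1 ∧ p * r + q * s + 1 < 1 := by exact_mod_cast h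
    omega
  have hab := hvertex a b (by rintro ⟨⟩; simp_all) (by simp [pyramidVerts])
  have hcd := hvertex c d (by rintro ⟨⟩; simp_all) (by simp [pyramidVerts])
  exact Int.isUnit_iff.mp (isUnit_det_of_mul_add_mul_eq_neg_one h1 hab hcd)

/-- If an affine-unimodular transformation `U` maps the pyramid `Q_{n,1}` onto `Q_{n,2}` and
sends the vertex `0` to a standard basis vector `eᵢ` with `i ≥ 3`, then, with
`ℓ = gcd(c-a, d-b)`, the matrix with columns `(a,b)` and `((c-a)/ℓ, (d-b)/ℓ)` lies in
`GL_2(ℤ)`. -/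
theorem origin_to_basis_gcd (n : ℕ) (hn : 2 < n) (a b c d a' b' c' d' : ℤ)
    (h1 : a * d - b * c ≠ 0) (h2 : a' * d' - b' * c' ≠ 0)
    (U : (Fin n → ℝ) → (Fin n → ℝ)) (hU : IsUnimodularMap n U)
    (hUQ : U '' pyramid n a b c d = pyramid n a' b' c' d')
    (i : Fin n) (hi : 2 ≤ (i : ℕ))
    (hUe : U (planarPt n 0 0) = Pi.single i 1) :
    (!![a, (c - a) / (Int.gcd (c - a) (d - b) : ℤ);
        b, (d - b) / (Int.gcd (c - a) (d - b) : ℤ)]).det = 1 ∨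
      (!![a, (c - a) / (Int.gcd (c - a) (d - b) : ℤ);
          b, (d - b) / (Int.gcd (c - a) (d - b) : ℤ)]).det = -1 :=
  origin_to_basis_gcd_general n a b c d a' b' c' d' h1 U hU hUQ i hi hUe
end

section
/- Let a,b,c,d,a',b',c',d' ∈ ℤ be such that Q_{2,1} = conv{(0,0),(a,b),(c,d)} and Q_{2,2} = conv{(0,0),(a',b'),(c',d')} are integral 2-simplices in ℝ², and for n > 2 let Q_{n,1} and Q_{n,2} be their n-dimensional pyramids conv{0,(a,b,0,…,0),(c,d,0,…,0),e_3,…,e_n} and conv{0,(a',b',0,…,0),(c',d',0,…,0),e_3,…,e_n} in ℝⁿ. If Q_{2,1} and Q_{2,2} are GL_2(ℤ)-equidecomposable, then Q_{n,1} and Q_{n,2} are GL_n(ℤ)-equidecomposable. -/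
open Pointwise

/-- A relatively open simplex: the set of strictly positive convex combinations of an
affinely independent finite family of points. -/
def IsRelOpenSimplex (n : ℕ) (s : Set (Fin n → ℝ)) : Prop :=
  ∃ (m : ℕ) (v : Fin (m + 1) → (Fin n → ℝ)),
    AffineIndependent ℝ v ∧
    s = {x | ∃ w : Fin (m + 1) → ℝ,
          (∀ i, 0 < w i) ∧ (∑ i, w i) = 1 ∧ x = ∑ i, w i • v i}

/-- `GL_n(ℤ)`-equidecomposability: matching partitions into relatively open simplices,
corresponding piecewise under affine-unimodular transformations. -/
def Equidecomposable (n : ℕ) (P Q : Set (Fin n → ℝ)) : Prop :=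
  ∃ (r : ℕ) (Ps Qs : Fin r → Set (Fin n → ℝ))
    (Us : Fin r → (Fin n → ℝ) → (Fin n → ℝ)),
      (∀ i, IsRelOpenSimplex n (Ps i)) ∧ (∀ i, IsRelOpenSimplex n (Qs i)) ∧
      (∀ i j, i ≠ j → Disjoint (Ps i) (Ps j)) ∧
      (∀ i j, i ≠ j → Disjoint (Qs i) (Qs j)) ∧
      P = ⋃ i, Ps i ∧ Q = ⋃ i, Qs i ∧
      (∀ i, IsUnimodularMap n (Us i)) ∧
      ∀ i, Us i '' Ps i = Qs i

/-!
The `(n+1)`-dimensional pyramid is the cone, with apex `e_{n+1}`, over the `n`-dimensional one,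
so by induction it suffices to lift an equidecomposition `P = ⊔ Pᵢ`, `Uᵢ '' Pᵢ = Qᵢ` to cones.
The cone over `P` is the disjoint union of the base `P`, the apex, and the open joins of the
pieces `Pᵢ` with the apex, and each of these is again a relatively open simplex. The affine map
`(x, t) ↦ (Uᵢ x - t • Uᵢ 0, t)` is unimodular, restricts to `Uᵢ` on the base and fixes the apex,
so it carries the pieces built from `Pᵢ` onto those built from `Qᵢ`.
-/

section OpenSimplex

variable {E F : Type*} [AddCommGroup E] [Module ℝ E] [AddCommGroup F] [Module ℝ F]

-- `IsRelOpenSimplex n s` unfolds to `s = openSimplex v` for an affinely independent `v`.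
def openSimplex {ι : Type*} [Fintype ι] (v : ι → E) : Set E :=
  {x | ∃ w : ι → ℝ, (∀ i, 0 < w i) ∧ ∑ i, w i = 1 ∧ x = ∑ i, w i • v i}

theorem LinearMap.image_openSimplex {ι : Type*} [Fintype ι] (f : E →ₗ[ℝ] F) (v : ι → E) :
    f '' openSimplex v = openSimplex (f ∘ v) := by
  ext y
  constructor
  · rintro ⟨_, ⟨w, hw, hw1, rfl⟩, rfl⟩
    exact ⟨w, hw, hw1, by simp⟩
  · rintro ⟨w, hw, hw1, rfl⟩
    exact ⟨_, ⟨w, hw, hw1, rfl⟩, by simp⟩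

theorem biUnion_openSegment_openSimplex {m : ℕ} (v : Fin (m + 1) → E) (a : E) :
    ⋃ p ∈ openSimplex v, openSegment ℝ p a = openSimplex (Fin.snoc v a : Fin (m + 2) → E) := by
  ext x
  simp only [Set.mem_iUnion, openSimplex, openSegment, Set.mem_ofPred_eq, exists_prop]
  constructor
  · rintro ⟨_, ⟨w, hw, hw1, rfl⟩, s, t, hs, ht, hst, rfl⟩
    refine ⟨Fin.snoc (s • w) t, fun i => ?_, ?_, ?_⟩
    · induction i using Fin.lastCases <;> simp [hs, ht, hw]
    · simp [Fin.sum_univ_castSucc, ← Finset.mul_sum, hw1, hst]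
    · simp [Fin.sum_univ_castSucc, Finset.smul_sum, smul_smul]
  · rintro ⟨w, hw, hw1, rfl⟩
    rw [Fin.sum_univ_castSucc] at hw1
    set s := ∑ i : Fin (m + 1), w i.castSucc
    have hs : 0 < s := Finset.sum_pos (fun i _ => hw _) Finset.univ_nonempty
    refine ⟨∑ i, (s⁻¹ * w i.castSucc) • v i, ⟨_, fun i => mul_pos (inv_pos.mpr hs) (hw _),
      by rw [← Finset.mul_sum, inv_mul_cancel₀ hs.ne'], rfl⟩, s, w (Fin.last _), hs, hw _, hw1, ?_⟩
    simp [Fin.sum_univ_castSucc, Finset.smul_sum, smul_smul, mul_inv_cancel_left₀ hs.ne']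

theorem openSimplex_const (x : E) : openSimplex (fun _ : Fin 1 => x) = {x} := by
  ext y
  simp only [openSimplex, Set.mem_ofPred_eq, Set.mem_singleton_iff, Fin.sum_univ_one]
  constructor
  · rintro ⟨w, -, hw1, rfl⟩
    rw [hw1, one_smul]
  · rintro rfl
    exact ⟨fun _ => 1, fun _ => one_pos, rfl, (one_smul ℝ y).symm⟩

end OpenSimplex

theorem AffineIndependent.snoc {k V P : Type*} [Field k] [AddCommGroup V] [Module k V]
    [AddTorsor V P] {m : ℕ} {v : Fin m → P} (hv : AffineIndependent k v) {a : P}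
    (ha : a ∉ affineSpan k (Set.range v)) :
    AffineIndependent k (Fin.snoc v a : Fin (m + 1) → P) := by
  refine AffineIndependent.affineIndependent_of_notMem_span (i := Fin.last m) ?_ ?_
  · rw [← affineIndependent_equiv (finSuccAboveEquiv (Fin.last m))]
    convert hv
    ext j
    simp [finSuccAboveEquiv_apply]
  · have hrange : (Fin.snoc v a : Fin (m + 1) → P) '' {x | x ≠ Fin.last m} = Set.range v := by
      ext x
      constructor
      · rintro ⟨i, hi, rfl⟩
        obtain ⟨j, rfl⟩ := Fin.exists_castSucc_eq.mpr hi
        exact ⟨j, by simp⟩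
      · rintro ⟨j, rfl⟩
        exact ⟨j.castSucc, Fin.castSucc_ne_last j, by simp⟩
    simpa [hrange] using ha

section Equidecomposable

open Function

variable {n : ℕ}

theorem isRelOpenSimplex_singleton (x : Fin n → ℝ) : IsRelOpenSimplex n {x} :=
  ⟨0, fun _ => x, affineIndependent_of_subsingleton (ι := Fin 1) ℝ _, (openSimplex_const x).symm⟩

theorem IsRelOpenSimplex.image_linearMap {k : ℕ} {s : Set (Fin n → ℝ)} (hs : IsRelOpenSimplex n s)
    (f : (Fin n → ℝ) →ₗ[ℝ] Fin k → ℝ) (hf : Injective f) :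
    IsRelOpenSimplex k (f '' s) := by
  obtain ⟨m, v, hv, rfl⟩ := hs
  exact ⟨m, f ∘ v, hv.map' f.toAffineMap hf, f.image_openSimplex v⟩

theorem isUnimodularMap_id : IsUnimodularMap n id :=
  ⟨1, 0, Or.inl Matrix.det_one, fun v => by ext; simp⟩

theorem IsUnimodularMap.image_openSegment {U : (Fin n → ℝ) → Fin n → ℝ} (hU : IsUnimodularMap n U)
    (x y : Fin n → ℝ) : U '' openSegment ℝ x y = openSegment ℝ (U x) (U y) := by
  obtain ⟨A, b, -, hU⟩ := hU
  let f : (Fin n → ℝ) →ᵃ[ℝ] Fin n → ℝ :=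
    ⟨U, Matrix.toLin' (A.map Int.cast), fun p v => by
      simp only [hU, vadd_eq_add, Matrix.mulVec_add, Matrix.toLin'_apply]; abel⟩
  exact _root_.image_openSegment ℝ f x y

theorem equidecomposable_of_fintype {ι : Type*} [Fintype ι] {P Q : Set (Fin n → ℝ)}
    (Ps Qs : ι → Set (Fin n → ℝ)) (Us : ι → (Fin n → ℝ) → Fin n → ℝ)
    (hPs : ∀ i, IsRelOpenSimplex n (Ps i)) (hQs : ∀ i, IsRelOpenSimplex n (Qs i))
    (hPd : Pairwise (Disjoint on Ps)) (hQd : Pairwise (Disjoint on Qs))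
    (hP : P = ⋃ i, Ps i) (hQ : Q = ⋃ i, Qs i) (hUs : ∀ i, IsUnimodularMap n (Us i))
    (hUP : ∀ i, Us i '' Ps i = Qs i) : Equidecomposable n P Q := by
  let e := (Fintype.equivFin ι).symm
  exact ⟨Fintype.card ι, Ps ∘ e, Qs ∘ e, Us ∘ e, fun _ => hPs _, fun _ => hQs _,
    fun _ _ h => hPd (e.injective.ne h), fun _ _ h => hQd (e.injective.ne h),
    hP.trans (e.surjective.iUnion_comp Ps).symm, hQ.trans (e.surjective.iUnion_comp Qs).symm,
    fun _ => hUs _, fun _ => hUP _⟩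

theorem pairwise_disjoint_sumElim {α ι κ : Type*} {f : ι → Set α} {g : κ → Set α}
    (hf : Pairwise (Disjoint on f)) (hg : Pairwise (Disjoint on g))
    (hfg : Disjoint (⋃ i, f i) (⋃ j, g j)) : Pairwise (Disjoint on Sum.elim f g) := by
  rintro (i | i) (j | j) hij
  · exact hf (fun h => hij (congrArg _ h))
  · exact hfg.mono (Set.subset_iUnion _ i) (Set.subset_iUnion _ j)
  · exact hfg.symm.mono (Set.subset_iUnion _ i) (Set.subset_iUnion _ j)
  · exact hg (fun h => hij (congrArg _ h))

theorem Equidecomposable.union {P₁ P₂ Q₁ Q₂ : Set (Fin n → ℝ)} (h₁ : Equidecomposable n P₁ Q₁)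
    (h₂ : Equidecomposable n P₂ Q₂) (hP : Disjoint P₁ P₂) (hQ : Disjoint Q₁ Q₂) :
    Equidecomposable n (P₁ ∪ P₂) (Q₁ ∪ Q₂) := by
  obtain ⟨r₁, Ps₁, Qs₁, Us₁, hPs₁, hQs₁, hPd₁, hQd₁, rfl, rfl, hUs₁, hUP₁⟩ := h₁
  obtain ⟨r₂, Ps₂, Qs₂, Us₂, hPs₂, hQs₂, hPd₂, hQd₂, rfl, rfl, hUs₂, hUP₂⟩ := h₂
  refine equidecomposable_of_fintype (Sum.elim Ps₁ Ps₂) (Sum.elim Qs₁ Qs₂) (Sum.elim Us₁ Us₂)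
    (Sum.forall.mpr ⟨hPs₁, hPs₂⟩) (Sum.forall.mpr ⟨hQs₁, hQs₂⟩)
    (pairwise_disjoint_sumElim hPd₁ hPd₂ hP) (pairwise_disjoint_sumElim hQd₁ hQd₂ hQ)
    (Set.iUnion_sumElim _ _).symm (Set.iUnion_sumElim _ _).symm
    (Sum.forall.mpr ⟨hUs₁, hUs₂⟩) (Sum.forall.mpr ⟨hUP₁, hUP₂⟩)

theorem equidecomposable_singleton (x : Fin n → ℝ) : Equidecomposable n {x} {x} :=
  ⟨1, fun _ => {x}, fun _ => {x}, fun _ => id, fun _ => isRelOpenSimplex_singleton x,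
    fun _ => isRelOpenSimplex_singleton x, fun i j h => absurd (Subsingleton.elim i j) h,
    fun i j h => absurd (Subsingleton.elim i j) h, (Set.iUnion_const _).symm,
    (Set.iUnion_const _).symm, fun _ => isUnimodularMap_id, fun _ => Set.image_id _⟩

theorem Equidecomposable.biUnion {k : ℕ} {P Q : Set (Fin n → ℝ)} (h : Equidecomposable n P Q)
    (G : (Fin n → ℝ) → Set (Fin k → ℝ)) (hG : Pairwise (Disjoint on G))
    (hsimplex : ∀ s, IsRelOpenSimplex n s → IsRelOpenSimplex k (⋃ x ∈ s, G x))
    (hlift : ∀ U, IsUnimodularMap n U → ∃ V, IsUnimodularMap k V ∧ ∀ x, V '' G x = G (U x)) :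
    Equidecomposable k (⋃ x ∈ P, G x) (⋃ x ∈ Q, G x) := by
  obtain ⟨r, Ps, Qs, Us, hPs, hQs, hPd, hQd, rfl, rfl, hUs, hUP⟩ := h
  choose V hV hVG using fun i => hlift (Us i) (hUs i)
  have disjoint_biUnion {s t : Set (Fin n → ℝ)} (hst : Disjoint s t) :
      Disjoint (⋃ x ∈ s, G x) (⋃ y ∈ t, G y) := by
    rw [Set.disjoint_iUnion₂_left]
    intro x hx
    rw [Set.disjoint_iUnion₂_right]
    exact fun y hy => hG (hst.ne_of_mem hx hy)
  refine ⟨r, fun i => ⋃ x ∈ Ps i, G x, fun i => ⋃ x ∈ Qs i, G x, V,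
    fun i => hsimplex _ (hPs i), fun i => hsimplex _ (hQs i),
    fun i j hij => disjoint_biUnion (hPd i j hij), fun i j hij => disjoint_biUnion (hQd i j hij),
    Set.biUnion_iUnion _ _, Set.biUnion_iUnion _ _, hV, fun i => ?_⟩
  simp only [Set.image_iUnion₂, hVG, ← hUP i, Set.biUnion_image]

end Equidecomposable

section Cone

open Function

variable {n : ℕ}

def embedLast (n : ℕ) : (Fin n → ℝ) →ₗ[ℝ] Fin (n + 1) → ℝ where
  toFun x := Fin.snoc x 0
  map_add' x y := by ext i; induction i using Fin.lastCases <;> simp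
  map_smul' c x := by ext i; induction i using Fin.lastCases <;> simp

def apex (n : ℕ) : Fin (n + 1) → ℝ := Fin.snoc 0 1

def coneOver (P : Set (Fin n → ℝ)) : Set (Fin (n + 1) → ℝ) :=
  convexJoin ℝ {apex n} (embedLast n '' P)

def openCone (P : Set (Fin n → ℝ)) : Set (Fin (n + 1) → ℝ) :=
  ⋃ x ∈ P, openSegment ℝ (embedLast n x) (apex n)

theorem embedLast_apply (x : Fin n → ℝ) : embedLast n x = Fin.snoc x 0 := rfl

theorem embedLast_injective : Injective (embedLast n) := by
  intro x y h
  rw [embedLast_apply, embedLast_apply] at h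
  exact (Fin.snoc_injective2 h).1

theorem openSegment_embedLast_apex (x : Fin n → ℝ) :
    openSegment ℝ (embedLast n x) (apex n) =
      (fun t => Fin.snoc ((1 - t) • x) t) '' Set.Ioo 0 1 := by
  rw [openSegment_eq_image]
  congr! 2 with t
  ext i
  induction i using Fin.lastCases <;> simp [embedLast_apply, apex]

theorem pairwise_disjoint_openSegment_embedLast_apex :
    Pairwise (Disjoint on fun x : Fin n → ℝ => openSegment ℝ (embedLast n x) (apex n)) := by
  intro x y hxy
  simp only [onFun, openSegment_embedLast_apex, Set.disjoint_left]
  rintro _ ⟨t, ht, rfl⟩ ⟨s, -, hst⟩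
  obtain ⟨hyx, rfl⟩ := Fin.snoc_injective2 hst
  exact hxy (smul_right_injective _ (sub_ne_zero.mpr ht.2.ne') hyx).symm

theorem last_mem_Ioo_of_mem_openCone {P : Set (Fin n → ℝ)} {z : Fin (n + 1) → ℝ}
    (hz : z ∈ openCone P) : z (Fin.last n) ∈ Set.Ioo 0 1 := by
  simp only [openCone, Set.mem_iUnion, openSegment_embedLast_apex] at hz
  obtain ⟨x, -, t, ht, rfl⟩ := hz
  simpa using ht

theorem disjoint_image_embedLast_openCone (P Q : Set (Fin n → ℝ)) :
    Disjoint (embedLast n '' P) (openCone Q) := by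
  rw [Set.disjoint_left]
  rintro _ ⟨x, -, rfl⟩ hz
  simpa [embedLast_apply] using (last_mem_Ioo_of_mem_openCone hz).1

theorem apex_notMem_image_embedLast_union_openCone (P Q : Set (Fin n → ℝ)) :
    apex n ∉ embedLast n '' P ∪ openCone Q := by
  rintro (⟨x, -, hx⟩ | hz)
  · simpa [embedLast_apply, apex] using congrFun hx (Fin.last n)
  · simpa [apex] using (last_mem_Ioo_of_mem_openCone hz).2

theorem coneOver_eq_union {P : Set (Fin n → ℝ)} (hP : P.Nonempty) :
    coneOver P = (embedLast n '' P ∪ openCone P) ∪ {apex n} := by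
  obtain ⟨x₀, hx₀⟩ := hP
  rw [coneOver, convexJoin_singleton_left, Set.biUnion_image]
  ext z
  simp only [segment_symm ℝ (apex n), ← insert_endpoints_openSegment, openCone, Set.mem_iUnion,
    Set.mem_insert_iff, Set.mem_union, Set.mem_image, Set.mem_singleton_iff, exists_prop]
  constructor
  · rintro ⟨x, hx, rfl | rfl | h⟩
    · exact Or.inl (Or.inl ⟨x, hx, rfl⟩)
    · exact Or.inr rfl
    · exact Or.inl (Or.inr ⟨x, hx, h⟩)
  · rintro ((⟨x, hx, rfl⟩ | ⟨x, hx, h⟩) | rfl)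
    · exact ⟨x, hx, Or.inl rfl⟩
    · exact ⟨x, hx, Or.inr (Or.inr h)⟩
    · exact ⟨x₀, hx₀, Or.inr (Or.inl rfl)⟩

theorem apex_notMem_affineSpan_image_embedLast (s : Set (Fin n → ℝ)) :
    apex n ∉ affineSpan ℝ (embedLast n '' s) := by
  intro h
  have hle : affineSpan ℝ (embedLast n '' s) ≤ (LinearMap.range (embedLast n)).toAffineSubspace :=
    affineSpan_le.mpr (Set.image_subset_range _ _)
  obtain ⟨x, hx⟩ := hle h
  simpa [embedLast_apply, apex] using congrFun hx (Fin.last n)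

theorem IsRelOpenSimplex.openCone {s : Set (Fin n → ℝ)} (hs : IsRelOpenSimplex n s) :
    IsRelOpenSimplex (n + 1) (openCone s) := by
  obtain ⟨m, v, hv, rfl⟩ := hs
  refine ⟨m + 1, Fin.snoc (embedLast n ∘ v) (apex n),
    (hv.map' (embedLast n).toAffineMap embedLast_injective).snoc ?_, ?_⟩
  · rw [Set.range_comp]
    exact apex_notMem_affineSpan_image_embedLast _
  · change _root_.openCone (openSimplex v) = openSimplex _
    rw [← biUnion_openSegment_openSimplex, ← LinearMap.image_openSimplex, Set.biUnion_image]
    rfl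

def liftMap (U : (Fin n → ℝ) → Fin n → ℝ) (y : Fin (n + 1) → ℝ) : Fin (n + 1) → ℝ :=
  Fin.snoc (U (Fin.init y) - y (Fin.last n) • U 0) (y (Fin.last n))

theorem liftMap_embedLast (U : (Fin n → ℝ) → Fin n → ℝ) (x : Fin n → ℝ) :
    liftMap U (embedLast n x) = embedLast n (U x) := by
  simp [liftMap, embedLast_apply]

theorem liftMap_apex (U : (Fin n → ℝ) → Fin n → ℝ) : liftMap U (apex n) = apex n := by
  simp [liftMap, apex]

/-- The block matrix `[[A, -b], [0, 1]]`: the linear part of `liftMap U` for `U = A · + b`. -/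
def liftMatrix (A : Matrix (Fin n) (Fin n) ℤ) (b : Fin n → ℤ) :
    Matrix (Fin (n + 1)) (Fin (n + 1)) ℤ :=
  Matrix.of <|
    Fin.snoc (fun i => (Fin.snoc (A i) (-b i) : Fin (n + 1) → ℤ)) (Pi.single (Fin.last n) 1)

theorem det_liftMatrix (A : Matrix (Fin n) (Fin n) ℤ) (b : Fin n → ℤ) :
    (liftMatrix A b).det = A.det := by
  have hminor : (liftMatrix A b).submatrix Fin.castSucc Fin.castSucc = A := by
    ext i j
    simp [liftMatrix]
  rw [Matrix.det_succ_row _ (Fin.last n), Fin.sum_univ_castSucc]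
  simp only [Fin.succAbove_last, hminor]
  simp [liftMatrix]

theorem IsUnimodularMap.liftMap {U : (Fin n → ℝ) → Fin n → ℝ} (hU : IsUnimodularMap n U) :
    IsUnimodularMap (n + 1) (liftMap U) := by
  obtain ⟨A, b, hA, hU⟩ := hU
  refine ⟨liftMatrix A b, Fin.snoc b 0, det_liftMatrix A b ▸ hA, fun y => ?_⟩
  ext i
  induction i using Fin.lastCases with
  | last => simp [_root_.liftMap, liftMatrix, Matrix.mulVec, dotProduct, Fin.sum_univ_castSucc]
  | cast i =>
    simp [_root_.liftMap, liftMatrix, hU, Matrix.mulVec, dotProduct, Fin.sum_univ_castSucc,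
      Fin.init]
    ring

theorem Equidecomposable.image_embedLast {P Q : Set (Fin n → ℝ)} (h : Equidecomposable n P Q) :
    Equidecomposable (n + 1) (embedLast n '' P) (embedLast n '' Q) := by
  simp only [Set.image_eq_iUnion]
  refine h.biUnion _ (fun x y hxy => Set.disjoint_singleton.mpr (embedLast_injective.ne hxy))
    (fun s hs => ?_) (fun U hU => ⟨liftMap U, hU.liftMap, fun x => ?_⟩)
  · rw [← Set.image_eq_iUnion]
    exact hs.image_linearMap _ embedLast_injective
  · rw [Set.image_singleton, liftMap_embedLast]

theorem Equidecomposable.openCone {P Q : Set (Fin n → ℝ)} (h : Equidecomposable n P Q) :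
    Equidecomposable (n + 1) (openCone P) (openCone Q) :=
  h.biUnion _ pairwise_disjoint_openSegment_embedLast_apex (fun _ hs => hs.openCone)
    fun U hU => ⟨liftMap U, hU.liftMap, fun x => by
      rw [hU.liftMap.image_openSegment, liftMap_embedLast, liftMap_apex]⟩

theorem Equidecomposable.coneOver {P Q : Set (Fin n → ℝ)} (h : Equidecomposable n P Q)
    (hP : P.Nonempty) (hQ : Q.Nonempty) : Equidecomposable (n + 1) (coneOver P) (coneOver Q) := by
  rw [coneOver_eq_union hP, coneOver_eq_union hQ]
  refine (h.image_embedLast.union h.openCone (disjoint_image_embedLast_openCone P P)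
    (disjoint_image_embedLast_openCone Q Q)).union (equidecomposable_singleton _) ?_ ?_ <;>
  exact Set.disjoint_singleton_right.mpr (apex_notMem_image_embedLast_union_openCone _ _)

end Cone

section Pyramid

variable {n : ℕ}

theorem embedLast_planarPt (hn : 2 ≤ n) (a b : ℤ) :
    embedLast n (planarPt n a b) = planarPt (n + 1) a b := by
  ext i
  induction i using Fin.lastCases with
  | last => simp [embedLast_apply, planarPt, show n ≠ 0 by omega, show n ≠ 1 by omega]
  | cast i => simp [embedLast_apply, planarPt]

theorem embedLast_single (i : Fin n) : embedLast n (Pi.single i 1) = Pi.single i.castSucc 1 := by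
  ext j
  induction j using Fin.lastCases <;> simp [embedLast_apply, Pi.single_apply]

theorem apex_eq_single : apex n = Pi.single (Fin.last n) 1 := by
  ext j
  induction j using Fin.lastCases <;> simp [apex]

theorem pyramidVerts_succ (hn : 2 ≤ n) (a b c d : ℤ) :
    pyramidVerts (n + 1) a b c d = insert (apex n) (embedLast n '' pyramidVerts n a b c d) := by
  ext x
  simp only [pyramidVerts, Set.image_union, Set.image_insert_eq, Set.image_singleton,
    embedLast_planarPt hn, Set.mem_union, Set.mem_insert_iff, Set.mem_singleton_iff,
    Set.mem_ofPred_eq, Set.mem_image, Fin.exists_fin_succ', Fin.val_castSucc, Fin.val_last,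
    apex_eq_single, hn, true_and]
  have hE : (∃ y, (∃ i : Fin n, 2 ≤ (i : ℕ) ∧ y = Pi.single i 1) ∧ embedLast n y = x) ↔
      ∃ i : Fin n, 2 ≤ (i : ℕ) ∧ x = Pi.single i.castSucc 1 := by
    simp [embedLast_single, eq_comm]
  rw [hE]
  exact or_rotate.symm

theorem pyramidVerts_nonempty (a b c d : ℤ) : (pyramidVerts n a b c d).Nonempty :=
  ⟨planarPt n 0 0, Or.inl (Set.mem_insert _ _)⟩

theorem pyramid_succ (hn : 2 ≤ n) (a b c d : ℤ) :
    pyramid (n + 1) a b c d = coneOver (pyramid n a b c d) := by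
  rw [pyramid, pyramidVerts_succ hn, convexHull_insert ((pyramidVerts_nonempty a b c d).image _),
    ← LinearMap.image_convexHull, coneOver, pyramid]

end Pyramid

theorem pyramid_equidecomposable_of_base_general (a b c d a' b' c' d' : ℤ)
    (n : ℕ) (hn : 2 < n)
    (h : Equidecomposable 2 (pyramid 2 a b c d) (pyramid 2 a' b' c' d')) :
    Equidecomposable n (pyramid n a b c d) (pyramid n a' b' c' d') := by
  refine Nat.le_induction h (fun k hk ih => ?_) n hn.le
  rw [pyramid_succ hk, pyramid_succ hk]
  exact ih.coneOver (pyramidVerts_nonempty a b c d).convexHull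
    (pyramidVerts_nonempty a' b' c' d').convexHull

/-- If two integral 2-simplices `conv{(0,0),(a,b),(c,d)}` and `conv{(0,0),(a',b'),(c',d')}`
are `GL_2(ℤ)`-equidecomposable, then for `n > 2` their n-dimensional pyramids are
`GL_n(ℤ)`-equidecomposable. -/
theorem pyramid_equidecomposable_of_base (a b c d a' b' c' d' : ℤ)
    (h1 : a * d - b * c ≠ 0) (h2 : a' * d' - b' * c' ≠ 0)
    (n : ℕ) (hn : 2 < n)
    (h : Equidecomposable 2 (pyramid 2 a b c d) (pyramid 2 a' b' c' d')) :
    Equidecomposable n (pyramid n a b c d) (pyramid n a' b' c' d') :=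
  pyramid_equidecomposable_of_base_general a b c d a' b' c' d' n hn h
end

section
/- Let R_1 = conv{(0,0,0,0), (9,0,0,0), (3,2,0,0), (0,0,1,0), (0,0,0,1)} ⊂ ℝ⁴ and R_2 = conv{(0,0,0,0), (6,0,0,0), (0,3,0,0), (0,0,1,0), (0,0,0,1)} ⊂ ℝ⁴. Then R_1 and R_2 are Ehrhart-equivalent — in fact, for every integer t ≥ 1, |tR_1 ∩ ℤ⁴| = |tR_2 ∩ ℤ⁴| = (3/4)t⁴ + 4t³ + (29/4)t² + 5t + 1 — but R_1 and R_2 are not unimodularly equivalent. -/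
open Pointwise

/-- The number of lattice points in the `k`-th dilate of `P`. -/
noncomputable def latticeCount (n : ℕ) (P : Set (Fin n → ℝ)) (k : ℕ) : ℕ :=
  Set.ncard {x : Fin n → ℤ | (fun i => (x i : ℝ)) ∈ (k : ℝ) • P}

/-- Ehrhart equivalence: the same number of lattice points in every positive dilate. -/
def EhrhartEquiv (n : ℕ) (P Q : Set (Fin n → ℝ)) : Prop :=
  ∀ k : ℕ, 1 ≤ k → latticeCount n P k = latticeCount n Q k

/-- The 4-polytope `R₁ = conv{0, 9e₁, 3e₁+2e₂, e₃, e₄}`. -/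
noncomputable def R1 : Set (Fin 4 → ℝ) :=
  convexHull ℝ {![0, 0, 0, 0], ![9, 0, 0, 0], ![3, 2, 0, 0], ![0, 0, 1, 0], ![0, 0, 0, 1]}

/-- The 4-polytope `R₂ = conv{0, 6e₁, 3e₂, e₃, e₄}`. -/
noncomputable def R2 : Set (Fin 4 → ℝ) :=
  convexHull ℝ {![0, 0, 0, 0], ![6, 0, 0, 0], ![0, 3, 0, 0], ![0, 0, 1, 0], ![0, 0, 0, 1]}

section Aux

open Finset

/-! ### Half-space descriptions of `R1` and `R2` -/

lemma memR1 (x : Fin 4 → ℝ) :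
    x ∈ R1 ↔ 0 ≤ x 1 ∧ 3 * x 1 ≤ 2 * x 0 ∧ 0 ≤ x 2 ∧ 0 ≤ x 3 ∧
      x 0 + 3 * x 1 + 9 * x 2 + 9 * x 3 ≤ 9 := by
  constructor
  · intro hx
    have hsub : R1 ⊆ {y : Fin 4 → ℝ | 0 ≤ y 1 ∧ 3 * y 1 ≤ 2 * y 0 ∧ 0 ≤ y 2 ∧ 0 ≤ y 3 ∧
        y 0 + 3 * y 1 + 9 * y 2 + 9 * y 3 ≤ 9} := by
      apply convexHull_min
      · intro y hy
        simp only [Set.mem_insert_iff, Set.mem_singleton_iff] at hy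
        rcases hy with rfl | rfl | rfl | rfl | rfl <;>
          simp [Set.mem_setOf_eq] <;> norm_num
      · rintro p ⟨hp0, hp1, hp2, hp3, hp4⟩ q ⟨hq0, hq1, hq2, hq3, hq4⟩ a b ha hb hab
        simp only [Set.mem_setOf_eq, Pi.add_apply, Pi.smul_apply, smul_eq_mul]
        refine ⟨by nlinarith, by nlinarith, by nlinarith, by nlinarith, by nlinarith⟩
    exact hsub hx
  · rintro ⟨h0, h1, h2, h3, h4⟩
    rw [R1, _root_.convexHull_eq]
    refine ⟨Fin 5, Finset.univ,
      ![1 - (x 0 + 3 * x 1) / 9 - x 2 - x 3, (2 * x 0 - 3 * x 1) / 18, x 1 / 2, x 2, x 3],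
      ![![0, 0, 0, 0], ![9, 0, 0, 0], ![3, 2, 0, 0], ![0, 0, 1, 0], ![0, 0, 0, 1]],
      ?_, ?_, ?_, ?_⟩
    · intro i _
      fin_cases i <;> simp <;> linarith
    · simp [Fin.sum_univ_five]; ring
    · intro i _; fin_cases i <;> simp
    · rw [Finset.centerMass_eq_of_sum_1]
      · funext j
        simp only [Fin.sum_univ_five, Pi.add_apply, Pi.smul_apply, smul_eq_mul]
        fin_cases j <;> simp [Matrix.vecHead, Matrix.vecTail] <;> ring
      · simp [Fin.sum_univ_five]; ring

lemma memR2 (x : Fin 4 → ℝ) :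
    x ∈ R2 ↔ 0 ≤ x 0 ∧ 0 ≤ x 1 ∧ 0 ≤ x 2 ∧ 0 ≤ x 3 ∧
      x 0 + 2 * x 1 + 6 * x 2 + 6 * x 3 ≤ 6 := by
  constructor
  · intro hx
    have hsub : R2 ⊆ {y : Fin 4 → ℝ | 0 ≤ y 0 ∧ 0 ≤ y 1 ∧ 0 ≤ y 2 ∧ 0 ≤ y 3 ∧
        y 0 + 2 * y 1 + 6 * y 2 + 6 * y 3 ≤ 6} := by
      apply convexHull_min
      · intro y hy
        simp only [Set.mem_insert_iff, Set.mem_singleton_iff] at hy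
        rcases hy with rfl | rfl | rfl | rfl | rfl <;>
          simp [Set.mem_setOf_eq] <;> norm_num
      · rintro p ⟨hp0, hp1, hp2, hp3, hp4⟩ q ⟨hq0, hq1, hq2, hq3, hq4⟩ a b ha hb hab
        simp only [Set.mem_setOf_eq, Pi.add_apply, Pi.smul_apply, smul_eq_mul]
        refine ⟨by nlinarith, by nlinarith, by nlinarith, by nlinarith, by nlinarith⟩
    exact hsub hx
  · rintro ⟨h0, h1, h2, h3, h4⟩
    rw [R2, _root_.convexHull_eq]
    refine ⟨Fin 5, Finset.univ,
      ![1 - x 0 / 6 - x 1 / 3 - x 2 - x 3, x 0 / 6, x 1 / 3, x 2, x 3],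
      ![![0, 0, 0, 0], ![6, 0, 0, 0], ![0, 3, 0, 0], ![0, 0, 1, 0], ![0, 0, 0, 1]],
      ?_, ?_, ?_, ?_⟩
    · intro i _
      fin_cases i <;> simp <;> linarith
    · simp [Fin.sum_univ_five]; ring
    · intro i _; fin_cases i <;> simp
    · rw [Finset.centerMass_eq_of_sum_1]
      · funext j
        simp only [Fin.sum_univ_five, Pi.add_apply, Pi.smul_apply, smul_eq_mul]
        fin_cases j <;> simp [Matrix.vecHead, Matrix.vecTail] <;> ring
      · simp [Fin.sum_univ_five]; ring

lemma memR1_smul (r : ℝ) (hr : 0 < r) (x : Fin 4 → ℝ) :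
    x ∈ r • R1 ↔ 0 ≤ x 1 ∧ 3 * x 1 ≤ 2 * x 0 ∧ 0 ≤ x 2 ∧ 0 ≤ x 3 ∧
      x 0 + 3 * x 1 + 9 * x 2 + 9 * x 3 ≤ 9 * r := by
  constructor
  · rintro ⟨y, hy, rfl⟩
    rw [memR1] at hy
    obtain ⟨a, b, c, d, e⟩ := hy
    simp only [Pi.smul_apply, smul_eq_mul]
    refine ⟨mul_nonneg hr.le a, by nlinarith, mul_nonneg hr.le c, mul_nonneg hr.le d,
      by nlinarith⟩
  · rintro ⟨a, b, c, d, e⟩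
    refine ⟨r⁻¹ • x, ?_, smul_inv_smul₀ hr.ne' x⟩
    rw [memR1]
    simp only [Pi.smul_apply, smul_eq_mul]
    have h1 : (0:ℝ) ≤ r⁻¹ := (inv_pos.2 hr).le
    have hrr : r⁻¹ * (9 * r) = 9 := by field_simp
    have h5 := mul_le_mul_of_nonneg_left e h1
    refine ⟨mul_nonneg h1 a, by nlinarith, mul_nonneg h1 c, mul_nonneg h1 d, by nlinarith⟩

lemma memR2_smul (r : ℝ) (hr : 0 < r) (x : Fin 4 → ℝ) :
    x ∈ r • R2 ↔ 0 ≤ x 0 ∧ 0 ≤ x 1 ∧ 0 ≤ x 2 ∧ 0 ≤ x 3 ∧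
      x 0 + 2 * x 1 + 6 * x 2 + 6 * x 3 ≤ 6 * r := by
  constructor
  · rintro ⟨y, hy, rfl⟩
    rw [memR2] at hy
    obtain ⟨a, b, c, d, e⟩ := hy
    simp only [Pi.smul_apply, smul_eq_mul]
    refine ⟨mul_nonneg hr.le a, mul_nonneg hr.le b, mul_nonneg hr.le c, mul_nonneg hr.le d,
      by nlinarith⟩
  · rintro ⟨a, b, c, d, e⟩
    refine ⟨r⁻¹ • x, ?_, smul_inv_smul₀ hr.ne' x⟩
    rw [memR2]
    simp only [Pi.smul_apply, smul_eq_mul]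
    have h1 : (0:ℝ) ≤ r⁻¹ := (inv_pos.2 hr).le
    have hrr : r⁻¹ * (6 * r) = 6 := by field_simp
    have h5 := mul_le_mul_of_nonneg_left e h1
    refine ⟨mul_nonneg h1 a, mul_nonneg h1 b, mul_nonneg h1 c, mul_nonneg h1 d, by nlinarith⟩

/-! ### The common Ehrhart counting function -/

/-- The slice count of `R1` at height parameter `m`. -/
def sl1 (m : ℕ) : ℕ := ∑ y ∈ range (2*m+1), (9*m + 1 - 3*y - (3*y+1)/2)

/-- The slice count of `R2` at height parameter `m`. -/
def sl2 (m : ℕ) : ℕ := ∑ y ∈ range (3*m+1), (6*m + 1 - 2*y)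

lemma sl1_eq (m : ℕ) : sl1 m = 9*m^2 + 6*m + 1 := by
  induction m with
  | zero => decide
  | succ m ih =>
    have h : sl1 (m+1) = sl1 m + (18*m + 15) := by
      unfold sl1
      have h2 : 2*(m+1)+1 = (2*m+1) + 1 + 1 := by ring
      rw [h2, sum_range_succ, sum_range_succ]
      have h3 : ∀ y ∈ range (2*m+1),
          (9*(m+1) + 1 - 3*y - (3*y+1)/2) = (9*m + 1 - 3*y - (3*y+1)/2) + 9 := by
        intro y hy
        rw [mem_range] at hy
        omega
      rw [sum_congr rfl h3, sum_add_distrib, sum_const, card_range]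
      have e1 : 9*(m+1) + 1 - 3*(2*m+1) - (3*(2*m+1)+1)/2 = 5 := by omega
      have e2 : 9*(m+1) + 1 - 3*(2*m+1+1) - (3*(2*m+1+1)+1)/2 = 1 := by omega
      rw [e1, e2]
      simp [smul_eq_mul]
      omega
    rw [h, ih]; ring

lemma sl2_eq (m : ℕ) : sl2 m = 9*m^2 + 6*m + 1 := by
  induction m with
  | zero => decide
  | succ m ih =>
    have h : sl2 (m+1) = sl2 m + (18*m + 15) := by
      unfold sl2
      have h2 : 3*(m+1)+1 = (3*m+1) + 1 + 1 + 1 := by ring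
      rw [h2, sum_range_succ, sum_range_succ, sum_range_succ]
      have h3 : ∀ y ∈ range (3*m+1),
          (6*(m+1) + 1 - 2*y) = (6*m + 1 - 2*y) + 6 := by
        intro y hy
        rw [mem_range] at hy
        omega
      rw [sum_congr rfl h3, sum_add_distrib, sum_const, card_range]
      have e1 : 6*(m+1) + 1 - 2*(3*m+1) = 5 := by omega
      have e2 : 6*(m+1) + 1 - 2*(3*m+1+1) = 3 := by omega
      have e3 : 6*(m+1) + 1 - 2*(3*m+1+1+1) = 1 := by omega
      rw [e1, e2, e3]
      simp [smul_eq_mul]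
      omega
    rw [h, ih]; ring

/-- `Tt s = ∑_{j ≤ s} (9 j² + 6 j + 1)`. -/
def Tt (s : ℕ) : ℕ := ∑ j ∈ range (s+1), (9*j^2 + 6*j + 1)

/-- The common Ehrhart counting function of `R1` and `R2`. -/
def Nt (t : ℕ) : ℕ := ∑ s ∈ range (t+1), Tt s

lemma Tt_cast (s : ℕ) : (Tt s : ℚ) = 3*s^3 + 15/2*s^2 + 11/2*s + 1 := by
  induction s with
  | zero => simp [Tt]
  | succ s ih =>
    have : Tt (s+1) = Tt s + (9*(s+1)^2 + 6*(s+1) + 1) := by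
      unfold Tt; rw [sum_range_succ]
    rw [this]
    push_cast [ih]
    ring

lemma Nt_cast (t : ℕ) : (Nt t : ℚ) = 3/4*t^4 + 4*t^3 + 29/4*t^2 + 5*t + 1 := by
  induction t with
  | zero => simp [Nt, Tt]
  | succ t ih =>
    have : Nt (t+1) = Nt t + Tt (t+1) := by
      unfold Nt; rw [sum_range_succ]
    rw [this]
    push_cast [ih, Tt_cast]
    ring

/-- Parametrization of the lattice points of `t • R1`. -/
def D1 (t : ℕ) : Finset (Σ _ : ℕ, Σ _ : ℕ, Σ _ : ℕ, ℕ) :=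
  (range (t+1)).sigma fun x4 => (range (t - x4 + 1)).sigma fun x3 =>
    (range (2*(t - x4 - x3) + 1)).sigma fun y =>
      range (9*(t - x4 - x3) + 1 - 3*y - (3*y+1)/2)

/-- Parametrization of the lattice points of `t • R2`. -/
def D2 (t : ℕ) : Finset (Σ _ : ℕ, Σ _ : ℕ, Σ _ : ℕ, ℕ) :=
  (range (t+1)).sigma fun x4 => (range (t - x4 + 1)).sigma fun x3 =>
    (range (3*(t - x4 - x3) + 1)).sigma fun y =>
      range (6*(t - x4 - x3) + 1 - 2*y)

lemma card_D1 (t : ℕ) : (D1 t).card = Nt t := by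
  unfold D1
  rw [card_sigma]
  have h : ∀ x4 ∈ range (t+1),
      (((range (t - x4 + 1)).sigma fun x3 =>
        (range (2*(t - x4 - x3) + 1)).sigma fun y =>
          range (9*(t - x4 - x3) + 1 - 3*y - (3*y+1)/2)).card) = Tt (t - x4) := by
    intro x4 _
    rw [card_sigma]
    have h2 : ∀ x3 ∈ range (t - x4 + 1),
        (((range (2*(t - x4 - x3) + 1)).sigma fun y =>
          range (9*(t - x4 - x3) + 1 - 3*y - (3*y+1)/2)).card)
            = 9*(t-x4-x3)^2 + 6*(t-x4-x3) + 1 := by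
      intro x3 _
      rw [card_sigma]
      have : ∀ y ∈ range (2*(t - x4 - x3) + 1),
          (range (9*(t - x4 - x3) + 1 - 3*y - (3*y+1)/2)).card
            = 9*(t-x4-x3) + 1 - 3*y - (3*y+1)/2 := fun y _ => card_range _
      rw [sum_congr rfl this]
      exact sl1_eq (t - x4 - x3)
    rw [sum_congr rfl h2]
    unfold Tt
    have := Finset.sum_range_reflect (fun j => 9*j^2 + 6*j + 1) (t - x4 + 1)
    rw [← this]
    apply sum_congr rfl
    intro x3 hx3
    rw [mem_range] at hx3
    have : t - x4 + 1 - 1 - x3 = t - x4 - x3 := by omega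
    rw [this]
  rw [sum_congr rfl h]
  unfold Nt
  have := Finset.sum_range_reflect (fun s => Tt s) (t + 1)
  rw [← this]
  apply sum_congr rfl
  intro x4 hx4
  rw [mem_range] at hx4
  have : t + 1 - 1 - x4 = t - x4 := by omega
  rw [this]

lemma card_D2 (t : ℕ) : (D2 t).card = Nt t := by
  unfold D2
  rw [card_sigma]
  have h : ∀ x4 ∈ range (t+1),
      (((range (t - x4 + 1)).sigma fun x3 =>
        (range (3*(t - x4 - x3) + 1)).sigma fun y =>
          range (6*(t - x4 - x3) + 1 - 2*y)).card) = Tt (t - x4) := by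
    intro x4 _
    rw [card_sigma]
    have h2 : ∀ x3 ∈ range (t - x4 + 1),
        (((range (3*(t - x4 - x3) + 1)).sigma fun y =>
          range (6*(t - x4 - x3) + 1 - 2*y)).card) = 9*(t-x4-x3)^2 + 6*(t-x4-x3) + 1 := by
      intro x3 _
      rw [card_sigma]
      have : ∀ y ∈ range (3*(t - x4 - x3) + 1),
          (range (6*(t - x4 - x3) + 1 - 2*y)).card
            = 6*(t-x4-x3) + 1 - 2*y := fun y _ => card_range _
      rw [sum_congr rfl this]
      exact sl2_eq (t - x4 - x3)
    rw [sum_congr rfl h2]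
    unfold Tt
    have := Finset.sum_range_reflect (fun j => 9*j^2 + 6*j + 1) (t - x4 + 1)
    rw [← this]
    apply sum_congr rfl
    intro x3 hx3
    rw [mem_range] at hx3
    have : t - x4 + 1 - 1 - x3 = t - x4 - x3 := by omega
    rw [this]
  rw [sum_congr rfl h]
  unfold Nt
  have := Finset.sum_range_reflect (fun s => Tt s) (t + 1)
  rw [← this]
  apply sum_congr rfl
  intro x4 hx4
  rw [mem_range] at hx4
  have : t + 1 - 1 - x4 = t - x4 := by omega
  rw [this]

/-- The lattice-point parametrization map for `R1`. -/
def psi1 (p : Σ _ : ℕ, Σ _ : ℕ, Σ _ : ℕ, ℕ) : Fin 4 → ℤ :=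
  ![(((3*p.2.2.1+1)/2 + p.2.2.2 : ℕ) : ℤ), (p.2.2.1 : ℤ), (p.2.1 : ℤ), (p.1 : ℤ)]

/-- The lattice-point parametrization map for `R2`. -/
def psi2 (p : Σ _ : ℕ, Σ _ : ℕ, Σ _ : ℕ, ℕ) : Fin 4 → ℤ :=
  ![(p.2.2.2 : ℤ), (p.2.2.1 : ℤ), (p.2.1 : ℤ), (p.1 : ℤ)]

lemma psi1_inj : Function.Injective psi1 := by
  rintro ⟨p4, p3, py, pi⟩ ⟨q4, q3, qy, qi⟩ h
  have h0 := congrFun h 0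
  have h1 := congrFun h 1
  have h2 := congrFun h 2
  have h3 := congrFun h 3
  simp only [psi1, Matrix.cons_val_zero, Matrix.cons_val_one, Matrix.head_cons,
    Matrix.cons_val_two, Matrix.tail_cons, Matrix.cons_val_three] at h0 h1 h2 h3
  have e4 : p4 = q4 := by exact_mod_cast h3
  have e3 : p3 = q3 := by exact_mod_cast h2
  have ey : py = qy := by exact_mod_cast h1
  have e0 : (3*py+1)/2 + pi = (3*qy+1)/2 + qi := by exact_mod_cast h0
  subst e4; subst e3; subst ey
  have : pi = qi := by omega
  subst this; rfl

lemma psi2_inj : Function.Injective psi2 := by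
  rintro ⟨p4, p3, py, pi⟩ ⟨q4, q3, qy, qi⟩ h
  have h0 := congrFun h 0
  have h1 := congrFun h 1
  have h2 := congrFun h 2
  have h3 := congrFun h 3
  simp only [psi2, Matrix.cons_val_zero, Matrix.cons_val_one, Matrix.head_cons,
    Matrix.cons_val_two, Matrix.tail_cons, Matrix.cons_val_three] at h0 h1 h2 h3
  have e4 : p4 = q4 := by exact_mod_cast h3
  have e3 : p3 = q3 := by exact_mod_cast h2
  have ey : py = qy := by exact_mod_cast h1
  have e0 : pi = qi := by exact_mod_cast h0
  subst e4; subst e3; subst ey; subst e0; rfl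

lemma count1 (t : ℕ) (ht : 1 ≤ t) : latticeCount 4 R1 t = Nt t := by
  have htR : (0:ℝ) < (t : ℝ) := by exact_mod_cast Nat.lt_of_lt_of_le Nat.zero_lt_one ht
  have hset : {x : Fin 4 → ℤ | (fun i => (x i : ℝ)) ∈ (t : ℝ) • R1} = psi1 '' ↑(D1 t) := by
    ext x
    simp only [Set.mem_setOf_eq, memR1_smul _ htR]
    constructor
    · rintro ⟨a, b, c, d, e⟩
      have a' : (0:ℤ) ≤ x 1 := by exact_mod_cast a
      have b' : 3 * x 1 ≤ 2 * x 0 := by exact_mod_cast b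
      have c' : (0:ℤ) ≤ x 2 := by exact_mod_cast c
      have d' : (0:ℤ) ≤ x 3 := by exact_mod_cast d
      have e' : x 0 + 3 * x 1 + 9 * x 2 + 9 * x 3 ≤ 9 * (t:ℤ) := by exact_mod_cast e
      refine ⟨⟨(x 3).toNat, (x 2).toNat, (x 1).toNat,
        (x 0 - ((3*(x 1).toNat+1)/2 : ℕ)).toNat⟩, ?_, ?_⟩
      · simp only [Finset.mem_coe, D1, mem_sigma, mem_range]
        refine ⟨?_, ?_, ?_, ?_⟩ <;> omega
      · funext j
        fin_cases j <;> simp [psi1] <;> omega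
    · rintro ⟨⟨x4, x3, y, i⟩, hp, rfl⟩
      rw [Finset.mem_coe] at hp
      simp only [D1, mem_sigma, mem_range] at hp
      obtain ⟨h4, h3, hy, hi⟩ := hp
      have g2 : 3*y ≤ 2*((3*y+1)/2 + i) := by omega
      have g5 : ((3*y+1)/2 + i) + 3*y + 9*x3 + 9*x4 ≤ 9*t := by omega
      refine ⟨?_, ?_, ?_, ?_, ?_⟩ <;>
        simp only [psi1, Matrix.cons_val_zero, Matrix.cons_val_one, Matrix.head_cons,
          Matrix.cons_val_two, Matrix.tail_cons, Matrix.cons_val_three]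
      · positivity
      · exact_mod_cast g2
      · positivity
      · positivity
      · exact_mod_cast g5
  unfold latticeCount
  rw [hset, Set.ncard_image_of_injective _ psi1_inj, Set.ncard_coe_finset, card_D1]

lemma count2 (t : ℕ) (ht : 1 ≤ t) : latticeCount 4 R2 t = Nt t := by
  have htR : (0:ℝ) < (t : ℝ) := by exact_mod_cast Nat.lt_of_lt_of_le Nat.zero_lt_one ht
  have hset : {x : Fin 4 → ℤ | (fun i => (x i : ℝ)) ∈ (t : ℝ) • R2} = psi2 '' ↑(D2 t) := by
    ext x
    simp only [Set.mem_setOf_eq, memR2_smul _ htR]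
    constructor
    · rintro ⟨a, b, c, d, e⟩
      have a' : (0:ℤ) ≤ x 0 := by exact_mod_cast a
      have b' : (0:ℤ) ≤ x 1 := by exact_mod_cast b
      have c' : (0:ℤ) ≤ x 2 := by exact_mod_cast c
      have d' : (0:ℤ) ≤ x 3 := by exact_mod_cast d
      have e' : x 0 + 2 * x 1 + 6 * x 2 + 6 * x 3 ≤ 6 * (t:ℤ) := by exact_mod_cast e
      refine ⟨⟨(x 3).toNat, (x 2).toNat, (x 1).toNat, (x 0).toNat⟩, ?_, ?_⟩
      · simp only [Finset.mem_coe, D2, mem_sigma, mem_range]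
        refine ⟨?_, ?_, ?_, ?_⟩ <;> omega
      · funext j
        fin_cases j <;> simp [psi2] <;> omega
    · rintro ⟨⟨x4, x3, y, i⟩, hp, rfl⟩
      rw [Finset.mem_coe] at hp
      simp only [D2, mem_sigma, mem_range] at hp
      obtain ⟨h4, h3, hy, hi⟩ := hp
      have g5 : i + 2*y + 6*x3 + 6*x4 ≤ 6*t := by omega
      refine ⟨?_, ?_, ?_, ?_, ?_⟩ <;>
        simp only [psi2, Matrix.cons_val_zero, Matrix.cons_val_one, Matrix.head_cons,
          Matrix.cons_val_two, Matrix.tail_cons, Matrix.cons_val_three]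
      · positivity
      · positivity
      · positivity
      · positivity
      · exact_mod_cast g5
  unfold latticeCount
  rw [hset, Set.ncard_image_of_injective _ psi2_inj, Set.ncard_coe_finset, card_D2]

/-! ### Non-unimodular-equivalence -/

lemma not_unimod : ¬ UnimodEquiv 4 R1 R2 := by
  rintro ⟨U, ⟨A, b, hdet, hU⟩, himg⟩
  have hv0 : ![(0:ℝ),0,0,0] ∈ R1 := subset_convexHull ℝ _ (by left; rfl)
  have hv9 : ![(9:ℝ),0,0,0] ∈ R1 := subset_convexHull ℝ _ (by right; left; rfl)
  have h0 : U ![0,0,0,0] ∈ R2 := by rw [← himg]; exact ⟨_, hv0, rfl⟩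
  have h9 : U ![9,0,0,0] ∈ R2 := by rw [← himg]; exact ⟨_, hv9, rfl⟩
  rw [hU, memR2] at h0 h9
  simp only [Pi.add_apply, Matrix.mulVec, Matrix.map_apply, dotProduct,
    Fin.sum_univ_four, Matrix.cons_val_zero, Matrix.cons_val_one, Matrix.head_cons,
    Matrix.cons_val_two, Matrix.tail_cons, Matrix.cons_val_three,
    mul_zero, zero_add, add_zero] at h0 h9
  obtain ⟨a0, a1, a2, a3, a4⟩ := h0
  obtain ⟨c0, c1, c2, c3, c4⟩ := h9
  have b0 : (0:ℤ) ≤ b 0 := by exact_mod_cast a0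
  have b1 : (0:ℤ) ≤ b 1 := by exact_mod_cast a1
  have b2 : (0:ℤ) ≤ b 2 := by exact_mod_cast a2
  have b3 : (0:ℤ) ≤ b 3 := by exact_mod_cast a3
  have b4 : b 0 + 2 * b 1 + 6 * b 2 + 6 * b 3 ≤ 6 := by exact_mod_cast a4
  have d0 : (0:ℤ) ≤ A 0 0 * 9 + b 0 := by exact_mod_cast c0
  have d1 : (0:ℤ) ≤ A 1 0 * 9 + b 1 := by exact_mod_cast c1
  have d2 : (0:ℤ) ≤ A 2 0 * 9 + b 2 := by exact_mod_cast c2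
  have d3 : (0:ℤ) ≤ A 3 0 * 9 + b 3 := by exact_mod_cast c3
  have d4 : (A 0 0 * 9 + b 0) + 2 * (A 1 0 * 9 + b 1) + 6 * (A 2 0 * 9 + b 2)
      + 6 * (A 3 0 * 9 + b 3) ≤ 6 := by exact_mod_cast c4
  have hA0 : A 0 0 = 0 := by omega
  have hA1 : A 1 0 = 0 := by omega
  have hA2 : A 2 0 = 0 := by omega
  have hA3 : A 3 0 = 0 := by omega
  have hA : ∀ i, A i 0 = 0 := by
    intro i
    fin_cases i
    exacts [hA0, hA1, hA2, hA3]
  have : A.det = 0 := Matrix.det_eq_zero_of_column_eq_zero 0 hA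
  rcases hdet with h | h <;> omega

end Aux

/-- `R₁` and `R₂` are Ehrhart-equivalent — both counting functions equal
`(3/4)t⁴ + 4t³ + (29/4)t² + 5t + 1` — but they are not unimodularly equivalent. -/
theorem ehrhartEquiv_not_unimodEquiv :
    (∀ t : ℕ, 1 ≤ t →
      latticeCount 4 R1 t = latticeCount 4 R2 t ∧
      (latticeCount 4 R1 t : ℚ) =
        3 / 4 * t ^ 4 + 4 * t ^ 3 + 29 / 4 * t ^ 2 + 5 * t + 1) ∧
    ¬ UnimodEquiv 4 R1 R2 := by
  refine ⟨fun t ht => ⟨?_, ?_⟩, not_unimod⟩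
  · rw [count1 t ht, count2 t ht]
  · rw [count1 t ht, Nt_cast]
end
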